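/- arXiv:1901.09744 — 4 statements merged into one kernel-verified Lean document; each statement's English description precedes it below -/
import Mathlib

section
/- Let n be even, a > 0, m = ⌊√(an)⌋, and d = (m, m, 1, ..., 1) (n - 2 ones). Let N_0 be the number of simple graphs on [n] with degree sequence d not containing the edge {1,2}, and N_1 the number containing it. Then N_1/N_0 = m²/(n - 2m), and hence N_1/N_0 → a as n → ∞. -/
/-!
Switching argument. From a graph counted by `N₁` together with an edge `uv` between leaves that
are not attached to the hubs `1, 2` (there are `n - 2m` ordered such pairs), replacing the edges
`12, uv` by `1u, 2v` gives a graph counted by `N₀` together with a leaf `u` of `1` and a leaf `v`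
of `2` (`m²` ordered pairs), and this is a bijection. Hence `N₁ (n - 2m) = N₀ m²`; an explicit
graph shows `N₀ > 0`. Finally `m / √(an) → 1`, so `m² / (n - 2m) → a`.
-/

open Finset SimpleGraph Filter

/-- `m = ⌊√(a n)⌋` with `n = 2k + 2`. -/
noncomputable def mdeg (a : ℝ) (k : ℕ) : ℕ := ⌊Real.sqrt (a * (2 * k + 2))⌋₊

/-- The degree sequence `(m, m, 1, …, 1)` on `n = 2k + 2` vertices. -/
noncomputable def dseq (a : ℝ) (k : ℕ) : Fin (2 * k + 2) → ℕ :=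
  fun i => if (i : ℕ) < 2 then mdeg a k else 1

/-- `G` has degree sequence `(m, m, 1, …, 1)`. -/
def DegCond (a : ℝ) (k : ℕ) (G : SimpleGraph (Fin (2 * k + 2))) : Prop :=
  ∀ i, (G.neighborSet i).ncard = dseq a k i

/-- Number of simple graphs with this degree sequence *not* containing the edge `{1,2}`
(vertices `0` and `1` in `Fin n`). -/
noncomputable def N0 (a : ℝ) (k : ℕ) : ℕ :=
  Nat.card {G : SimpleGraph (Fin (2 * k + 2)) //
    DegCond a k G ∧ ¬ G.Adj ⟨0, by omega⟩ ⟨1, by omega⟩}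

/-- Number of simple graphs with this degree sequence containing the edge `{1,2}`. -/
noncomputable def N1 (a : ℝ) (k : ℕ) : ℕ :=
  Nat.card {G : SimpleGraph (Fin (2 * k + 2)) //
    DegCond a k G ∧ G.Adj ⟨0, by omega⟩ ⟨1, by omega⟩}

theorem Nat.card_subtype_prod_eq_mul {α β : Type*} [Fintype α] [Finite β] {P : α → Prop}
    {Q : α → β → Prop} {c : ℕ} (hQ : ∀ a b, Q a b → P a)
    (hc : ∀ a, P a → Nat.card {b // Q a b} = c) :
    Nat.card {x : α × β // Q x.1 x.2} = Nat.card {a // P a} * c := by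
  classical
  have hfiber (a : α) : Nat.card {b // Q a b} = if P a then c else 0 := by
    split_ifs with ha
    · exact hc a ha
    · exact Nat.card_eq_zero.2 (.inl ⟨fun b => ha (hQ a b.1 b.2)⟩)
  rw [Nat.card_congr (Equiv.subtypeProdEquivSigmaSubtype Q), Nat.card_sigma,
    Finset.sum_congr rfl fun a _ => hfiber a, Finset.sum_ite, Finset.sum_const_zero, add_zero,
    Finset.sum_const, smul_eq_mul, Nat.card_eq_fintype_card, Fintype.card_subtype]

namespace SimpleGraph

variable {V : Type*} (G : SimpleGraph V)

def switch (p q u v : V) : SimpleGraph V :=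
  G.deleteEdges {s(p, q), s(u, v)} ⊔ fromEdgeSet {s(p, u), s(q, v)}

structure IsSwitchable (p q u v : V) : Prop where
  adj_pq : G.Adj p q
  adj_uv : G.Adj u v
  not_adj_pu : ¬ G.Adj p u
  not_adj_qv : ¬ G.Adj q v
  ne_pu : p ≠ u
  ne_qv : q ≠ v

variable {G} {p q u v : V}

theorem switch_adj {w z : V} : (G.switch p q u v).Adj w z ↔
    G.Adj w z ∧ s(w, z) ≠ s(p, q) ∧ s(w, z) ≠ s(u, v) ∨
      w ≠ z ∧ (s(w, z) = s(p, u) ∨ s(w, z) = s(q, v)) := by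
  simp only [switch, sup_adj, deleteEdges_adj, fromEdgeSet_adj, Set.mem_insert_iff,
    Set.mem_singleton_iff]
  tauto

theorem switch_comm : G.switch p q u v = G.switch q p v u := by
  ext w z
  simp only [switch_adj, Sym2.eq_swap]
  tauto

theorem switch_swap : G.switch p q u v = G.switch u v p q := by
  ext w z
  simp only [switch_adj, Sym2.eq_swap]
  tauto

namespace IsSwitchable

variable (h : G.IsSwitchable p q u v)
include h

theorem ne_pv : p ≠ v := by
  rintro rfl
  exact h.not_adj_pu h.adj_uv.symm

theorem ne_qu : q ≠ u := by
  rintro rfl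
  exact h.not_adj_pu h.adj_pq

theorem comm : G.IsSwitchable q p v u :=
  ⟨h.adj_pq.symm, h.adj_uv.symm, h.not_adj_qv, h.not_adj_pu, h.ne_qv, h.ne_pu⟩

theorem swap : G.IsSwitchable u v p q :=
  ⟨h.adj_uv, h.adj_pq, fun h' => h.not_adj_pu h'.symm, fun h' => h.not_adj_qv h'.symm,
    h.ne_pu.symm, h.ne_qv.symm⟩

theorem switch : (G.switch p q u v).IsSwitchable p u q v where
  adj_pq := switch_adj.2 (.inr ⟨h.ne_pu, .inl rfl⟩)
  adj_uv := switch_adj.2 (.inr ⟨h.ne_qv, .inr rfl⟩)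
  not_adj_pu := by
    have := h.ne_pv
    have := h.ne_qu
    simp only [switch_adj, ne_eq, Sym2.eq_iff]
    tauto
  not_adj_qv := by
    have := h.ne_pv
    have := h.ne_qu
    have := h.adj_pq.ne
    have := h.adj_uv.ne
    simp only [switch_adj, ne_eq, Sym2.eq_iff]
    tauto
  ne_pu := h.adj_pq.ne
  ne_qv := h.adj_uv.ne

theorem switch_switch : (G.switch p q u v).switch p u q v = G := by
  have := h.ne_pv
  have := h.ne_qu
  have := h.adj_pq.ne
  have := h.adj_uv.ne
  obtain ⟨hpq, huv, hpu, hqv, -, -⟩ := h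
  ext w z
  simp only [switch_adj, ne_eq, Sym2.eq_iff]
  grind [G.adj_symm, G.loopless]

theorem neighborSet_switch_left :
    (G.switch p q u v).neighborSet p = insert u (G.neighborSet p \ {q}) := by
  have := h.ne_pv
  have := h.adj_pq.ne
  have := h.ne_pu
  have := h.ne_qv
  ext z
  simp only [mem_neighborSet, switch_adj, ne_eq, Sym2.eq_iff, Set.mem_insert_iff, Set.mem_sdiff,
    Set.mem_singleton_iff]
  grind

theorem ncard_neighborSet_switch_left :
    ((G.switch p q u v).neighborSet p).ncard = (G.neighborSet p).ncard := by
  rw [h.neighborSet_switch_left]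
  exact Set.ncard_exchange h.not_adj_pu h.adj_pq

theorem ncard_neighborSet_switch (w : V) :
    ((G.switch p q u v).neighborSet w).ncard = (G.neighborSet w).ncard := by
  by_cases hp : w = p
  · subst hp
    exact h.ncard_neighborSet_switch_left
  by_cases hq : w = q
  · subst hq
    rw [switch_comm]
    exact h.comm.ncard_neighborSet_switch_left
  by_cases hu : w = u
  · subst hu
    rw [switch_swap]
    exact h.swap.ncard_neighborSet_switch_left
  by_cases hv : w = v
  · subst hv
    rw [switch_swap, switch_comm]
    exact h.swap.comm.ncard_neighborSet_switch_left
  congr 1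
  ext z
  simp only [mem_neighborSet, switch_adj, ne_eq, Sym2.eq_iff]
  grind

end IsSwitchable

def switchEquiv (d : V → ℕ) (p q : V) :
    {t : SimpleGraph V × V × V //
      (∀ w, (t.1.neighborSet w).ncard = d w) ∧ t.1.IsSwitchable p q t.2.1 t.2.2} ≃
    {t : SimpleGraph V × V × V //
      (∀ w, (t.1.neighborSet w).ncard = d w) ∧ t.1.IsSwitchable p t.2.1 q t.2.2} where
  toFun t := ⟨(t.1.1.switch p q t.1.2.1 t.1.2.2, t.1.2),
    fun w => (t.2.2.ncard_neighborSet_switch w).trans (t.2.1 w), t.2.2.switch⟩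
  invFun t := ⟨(t.1.1.switch p t.1.2.1 q t.1.2.2, t.1.2),
    fun w => (t.2.2.ncard_neighborSet_switch w).trans (t.2.1 w), t.2.2.switch⟩
  left_inv t := Subtype.ext (Prod.ext t.2.2.switch_switch rfl)
  right_inv t := Subtype.ext (Prod.ext t.2.2.switch_switch rfl)

theorem eq_of_adj_of_ncard_neighborSet_eq_one {w x y : V} (hw : (G.neighborSet w).ncard = 1)
    (hx : G.Adj w x) (hy : G.Adj w y) : x = y := by
  obtain ⟨c, hc⟩ := Set.ncard_eq_one.1 hw
  have hx' : x ∈ G.neighborSet w := hx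
  have hy' : y ∈ G.neighborSet w := hy
  rw [hc] at hx' hy'
  exact hx'.trans hy'.symm

theorem exists_adj_of_ncard_neighborSet_eq_one {w : V} (hw : (G.neighborSet w).ncard = 1) :
    ∃ x, G.Adj w x :=
  Set.nonempty_of_ncard_ne_zero (hw ▸ one_ne_zero)

section TwoHubs

variable (hpq : p ≠ q) (hleaf : ∀ w, w ≠ p → w ≠ q → (G.neighborSet w).ncard = 1)
include hpq hleaf

theorem isSwitchable_iff_of_not_adj (hn : ¬ G.Adj p q) :
    G.IsSwitchable p u q v ↔ G.Adj p u ∧ G.Adj q v := by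
  refine ⟨fun h => ⟨h.adj_pq, h.adj_uv⟩, fun ⟨hu, hv⟩ => ?_⟩
  have hu_leaf := hleaf u hu.ne.symm (by rintro rfl; exact hn hu)
  have hvp : v ≠ p := by rintro rfl; exact hn hv.symm
  refine ⟨hu, hv, hn, fun huv => hvp ?_, hpq, ?_⟩
  · exact eq_of_adj_of_ncard_neighborSet_eq_one hu_leaf huv hu.symm
  · rintro rfl
    exact hpq (eq_of_adj_of_ncard_neighborSet_eq_one hu_leaf hu.symm hv.symm)

theorem card_isSwitchable_of_not_adj (hn : ¬ G.Adj p q) :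
    Nat.card {x : V × V // G.IsSwitchable p x.1 q x.2} =
      (G.neighborSet p).ncard * (G.neighborSet q).ncard := by
  simp only [isSwitchable_iff_of_not_adj hpq hleaf hn]
  rw [Nat.card_congr Equiv.subtypeProdEquivProd, Nat.card_prod]
  rfl

theorem disjoint_neighborSet_of_leaves : Disjoint (G.neighborSet p) (G.neighborSet q) :=
  Set.disjoint_left.2 fun w hwp hwq => hpq <| eq_of_adj_of_ncard_neighborSet_eq_one
    (hleaf w (G.ne_of_adj hwp).symm (G.ne_of_adj hwq).symm) (G.adj_symm hwp) (G.adj_symm hwq)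

theorem image_fst_isSwitchable (ha : G.Adj p q) :
    Prod.fst '' {x : V × V | G.IsSwitchable p q x.1 x.2} =
      (G.neighborSet p ∪ G.neighborSet q)ᶜ := by
  ext u
  simp only [Set.mem_image, Set.mem_ofPred_eq, Prod.exists, exists_and_right, exists_eq_right,
    Set.mem_compl_iff, Set.mem_union, mem_neighborSet, not_or]
  constructor
  · rintro ⟨v, h⟩
    refine ⟨h.not_adj_pu, fun hqu => h.ne_qv ?_⟩
    exact (eq_of_adj_of_ncard_neighborSet_eq_one (hleaf u h.ne_pu.symm h.ne_qu.symm) h.adj_uv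
      (G.adj_symm hqu)).symm
  · rintro ⟨hpu, hqu⟩
    have hup : u ≠ p := by rintro rfl; exact hqu ha.symm
    have huq : u ≠ q := by rintro rfl; exact hpu ha
    obtain ⟨v, huv⟩ := exists_adj_of_ncard_neighborSet_eq_one (hleaf u hup huq)
    have hvp : v ≠ p := by rintro rfl; exact hpu huv.symm
    have hvq : v ≠ q := by rintro rfl; exact hqu huv.symm
    refine ⟨v, ha, huv, hpu, fun hqv => huq ?_, hup.symm, hvq.symm⟩
    exact eq_of_adj_of_ncard_neighborSet_eq_one (hleaf v hvp hvq) huv.symm hqv.symm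

theorem card_isSwitchable_of_adj [Finite V] (ha : G.Adj p q) :
    Nat.card {x : V × V // G.IsSwitchable p q x.1 x.2} =
      Nat.card V - ((G.neighborSet p).ncard + (G.neighborSet q).ncard) := by
  have hinj : Set.InjOn Prod.fst {x : V × V | G.IsSwitchable p q x.1 x.2} := by
    rintro ⟨u, v⟩ (h : G.IsSwitchable p q u v) ⟨u', v'⟩ (h' : G.IsSwitchable p q u' v')
      (rfl : u = u')
    exact Prod.ext rfl (eq_of_adj_of_ncard_neighborSet_eq_one
      (hleaf u h.ne_pu.symm h.ne_qu.symm) h.adj_uv h'.adj_uv)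
  have hcompl := Set.ncard_add_ncard_compl (G.neighborSet p ∪ G.neighborSet q)
  rw [Set.ncard_union_eq (disjoint_neighborSet_of_leaves hpq hleaf),
    ← image_fst_isSwitchable hpq hleaf ha, hinj.ncard_image] at hcompl
  exact (Nat.card_coe_set_eq {x : V × V | G.IsSwitchable p q x.1 x.2}).trans (by omega)

end TwoHubs

end SimpleGraph

section DegreeSequence

variable {a : ℝ} {k : ℕ} {G : SimpleGraph (Fin (2 * k + 2))}

theorem DegCond.ncard_neighborSet_eq_one (hG : DegCond a k G) (w : Fin (2 * k + 2))
    (h0 : w ≠ 0) (h1 : w ≠ 1) : (G.neighborSet w).ncard = 1 := by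
  rw [hG w, dseq, if_neg]
  simp only [ne_eq, Fin.ext_iff, Fin.val_zero, Fin.val_one] at h0 h1
  omega

theorem DegCond.ncard_neighborSet_zero (hG : DegCond a k G) :
    (G.neighborSet 0).ncard = mdeg a k := hG 0

theorem DegCond.ncard_neighborSet_one (hG : DegCond a k G) :
    (G.neighborSet 1).ncard = mdeg a k := hG 1

theorem N1_mul_eq_N0_mul :
    N1 a k * (2 * k + 2 - (mdeg a k + mdeg a k)) = N0 a k * (mdeg a k * mdeg a k) := by
  have h01 : (0 : Fin (2 * k + 2)) ≠ 1 := Fin.zero_ne_one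
  calc N1 a k * (2 * k + 2 - (mdeg a k + mdeg a k))
      = Nat.card {t : SimpleGraph (Fin (2 * k + 2)) × Fin (2 * k + 2) × Fin (2 * k + 2) //
          DegCond a k t.1 ∧ t.1.IsSwitchable 0 1 t.2.1 t.2.2} := by
        refine (Nat.card_subtype_prod_eq_mul (P := fun G => DegCond a k G ∧ G.Adj 0 1)
          (Q := fun G (x : Fin (2 * k + 2) × Fin (2 * k + 2)) =>
            DegCond a k G ∧ G.IsSwitchable 0 1 x.1 x.2)
          (fun _ _ h => ⟨h.1, h.2.adj_pq⟩) ?_).symm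
        rintro G ⟨hG, hadj⟩
        simp only [hG, true_and]
        rw [card_isSwitchable_of_adj h01 hG.ncard_neighborSet_eq_one hadj, Nat.card_fin,
          hG.ncard_neighborSet_zero, hG.ncard_neighborSet_one]
    _ = Nat.card {t : SimpleGraph (Fin (2 * k + 2)) × Fin (2 * k + 2) × Fin (2 * k + 2) //
          DegCond a k t.1 ∧ t.1.IsSwitchable 0 t.2.1 1 t.2.2} :=
        Nat.card_congr (switchEquiv (dseq a k) 0 1)
    _ = N0 a k * (mdeg a k * mdeg a k) := by
        refine Nat.card_subtype_prod_eq_mul (P := fun G => DegCond a k G ∧ ¬ G.Adj 0 1)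
          (Q := fun G (x : Fin (2 * k + 2) × Fin (2 * k + 2)) =>
            DegCond a k G ∧ G.IsSwitchable 0 x.1 1 x.2)
          (fun _ _ h => ⟨h.1, h.2.not_adj_pu⟩) ?_
        rintro G ⟨hG, hadj⟩
        simp only [hG, true_and]
        rw [card_isSwitchable_of_not_adj h01 hG.ncard_neighborSet_eq_one hadj,
          hG.ncard_neighborSet_zero, hG.ncard_neighborSet_one]

end DegreeSequence

section Witness

theorem SimpleGraph.ncard_neighborSet_eq_ncard_of_adj_iff {n : ℕ} {G : SimpleGraph (Fin n)} {i : Fin n}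
    {T : Set ℕ} (hT : T ⊆ Set.Iio n) (h : ∀ j : Fin n, G.Adj i j ↔ j.val ∈ T) :
    (G.neighborSet i).ncard = T.ncard := by
  rw [← Set.ncard_preimage_of_injective_subset_range Fin.val_injective (Fin.range_val ▸ hT)]
  exact congrArg Set.ncard (Set.ext h)

/-- The last clause matches `2j` with `2j + 1` for `j > m`. -/
def starsAndMatching (m k : ℕ) : SimpleGraph (Fin (2 * k + 2)) :=
  SimpleGraph.fromRel fun i j =>
    (i.val = 0 ∧ 2 ≤ j.val ∧ j.val < m + 2) ∨ (i.val = 1 ∧ m + 2 ≤ j.val ∧ j.val < 2 * m + 2) ∨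
      (m < i.val / 2 ∧ i.val / 2 = j.val / 2)

theorem starsAndMatching_adj {m k : ℕ} {i j : Fin (2 * k + 2)} :
    (starsAndMatching m k).Adj i j ↔ i.val ≠ j.val ∧
      ((i.val = 0 ∧ 2 ≤ j.val ∧ j.val < m + 2) ∨ (j.val = 0 ∧ 2 ≤ i.val ∧ i.val < m + 2) ∨
        (i.val = 1 ∧ m + 2 ≤ j.val ∧ j.val < 2 * m + 2) ∨
        (j.val = 1 ∧ m + 2 ≤ i.val ∧ i.val < 2 * m + 2) ∨
        (m < i.val / 2 ∧ i.val / 2 = j.val / 2)) := by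
  simp only [starsAndMatching, fromRel_adj, ne_eq, Fin.ext_iff]
  omega

theorem ncard_neighborSet_starsAndMatching {m k : ℕ} (hmk : m ≤ k) (i : Fin (2 * k + 2)) :
    ((starsAndMatching m k).neighborSet i).ncard = if i.val < 2 then m else 1 := by
  have hi := i.isLt
  have key (T : Set ℕ) (hT : ∀ j ∈ T, j < 2 * k + 2)
      (h : ∀ j : Fin (2 * k + 2), (starsAndMatching m k).Adj i j ↔ j.val ∈ T) :
      ((starsAndMatching m k).neighborSet i).ncard = T.ncard :=
    ncard_neighborSet_eq_ncard_of_adj_iff hT h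
  split_ifs with h2
  · obtain h0 | h1 : i.val = 0 ∨ i.val = 1 := by omega
    · rw [key (Set.Ico 2 (m + 2)) (fun j hj => by simp at hj; omega)
        (fun j => by rw [starsAndMatching_adj, Set.mem_Ico]; omega), Set.ncard_Ico_nat]
      omega
    · rw [key (Set.Ico (m + 2) (2 * m + 2)) (fun j hj => by simp at hj; omega)
        (fun j => by rw [starsAndMatching_adj, Set.mem_Ico]; omega), Set.ncard_Ico_nat]
      omega
  have key₁ (c : ℕ) (hc : c < 2 * k + 2)
      (h : ∀ j : Fin (2 * k + 2), (starsAndMatching m k).Adj i j ↔ j.val = c) :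
      ((starsAndMatching m k).neighborSet i).ncard = 1 := by
    rw [key {c} (by simpa using hc) h, Set.ncard_singleton]
  rcases Nat.lt_or_ge i.val (m + 2) with h | h
  · exact key₁ 0 (by omega) fun j => by rw [starsAndMatching_adj]; omega
  rcases Nat.lt_or_ge i.val (2 * m + 2) with h' | h'
  · exact key₁ 1 (by omega) fun j => by rw [starsAndMatching_adj]; omega
  rcases Nat.mod_two_eq_zero_or_one i.val with hpar | hpar
  · exact key₁ (i.val + 1) (by omega) fun j => by rw [starsAndMatching_adj]; omega
  · exact key₁ (i.val - 1) (by omega) fun j => by rw [starsAndMatching_adj]; omega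

theorem N0_pos {a : ℝ} {k : ℕ} (hk : mdeg a k ≤ k) : 0 < N0 a k :=
  Nat.card_pos_iff.2 ⟨⟨⟨starsAndMatching (mdeg a k) k,
    ncard_neighborSet_starsAndMatching hk, by simp [starsAndMatching]⟩⟩, inferInstance⟩

end Witness

section Asymptotics

open Topology

variable {a : ℝ}

theorem tendsto_floor_sqrt_div_sqrt (ha : 0 < a) :
    Tendsto (fun x : ℝ => (⌊√(a * x)⌋₊ : ℝ) / √(a * x)) atTop (𝓝 1) :=
  tendsto_nat_floor_div_atTop.comp
    (Real.tendsto_sqrt_atTop.comp (tendsto_id.const_mul_atTop ha))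

theorem tendsto_sqrt_mul_div (ha : 0 < a) : Tendsto (fun x : ℝ => √(a * x) / x) atTop (𝓝 0) := by
  have h : Tendsto (fun x : ℝ => √a * (√x)⁻¹) atTop (𝓝 (√a * 0)) :=
    (tendsto_inv_atTop_zero.comp Real.tendsto_sqrt_atTop).const_mul _
  rw [mul_zero] at h
  refine h.congr' ((eventually_gt_atTop 0).mono fun x hx => ?_)
  simp only [Real.sqrt_mul ha.le, mul_div_assoc, Real.sqrt_div_self]

theorem tendsto_floor_sqrt_div (ha : 0 < a) :
    Tendsto (fun x : ℝ => (⌊√(a * x)⌋₊ : ℝ) / x) atTop (𝓝 0) := by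
  have h := (tendsto_floor_sqrt_div_sqrt ha).mul (tendsto_sqrt_mul_div ha)
  rw [one_mul] at h
  refine h.congr' ((eventually_gt_atTop 0).mono fun x hx => ?_)
  have : √(a * x) ≠ 0 := (Real.sqrt_pos.2 (mul_pos ha hx)).ne'
  field_simp

theorem tendsto_floor_sqrt_sq_div (ha : 0 < a) :
    Tendsto (fun x : ℝ => (⌊√(a * x)⌋₊ : ℝ) ^ 2 / (x - 2 * ⌊√(a * x)⌋₊)) atTop (𝓝 a) := by
  have h := (((tendsto_floor_sqrt_div_sqrt ha).pow 2).const_mul a).div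
    (((tendsto_floor_sqrt_div ha).const_mul 2).const_sub 1) (by norm_num)
  simp only [one_pow, mul_one, mul_zero, sub_zero, div_one] at h
  refine h.congr' ((eventually_gt_atTop 0).mono fun x hx => ?_)
  have hs : √(a * x) ^ 2 = a * x := Real.sq_sqrt (mul_pos ha hx).le
  simp only [Pi.div_apply, div_pow, hs]
  field_simp

theorem tendsto_two_mul_add_two : Tendsto (fun k : ℕ => (2 * k + 2 : ℝ)) atTop atTop :=
  tendsto_atTop_add_const_right _ 2 (tendsto_natCast_atTop_atTop.const_mul_atTop two_pos)

theorem eventually_two_mul_mdeg_add_two_lt (ha : 0 < a) :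
    ∀ᶠ k in atTop, 2 * mdeg a k + 2 < 2 * k + 2 := by
  filter_upwards [((tendsto_floor_sqrt_div ha).comp tendsto_two_mul_add_two).eventually_lt_const
    (by norm_num : (0 : ℝ) < 1 / 4), tendsto_two_mul_add_two.eventually_gt_atTop 4] with k hm hk
  rw [Function.comp_apply, div_lt_iff₀ (by linarith)] at hm
  have : (2 * mdeg a k + 2 : ℝ) < 2 * k + 2 := by unfold mdeg; linarith
  exact_mod_cast this

end Asymptotics

theorem N1_div_N0 {a : ℝ} {k : ℕ} (hk : 2 * mdeg a k + 2 < 2 * k + 2) :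
    (N1 a k : ℝ) / N0 a k = (mdeg a k : ℝ) ^ 2 / ((2 * k + 2 : ℝ) - 2 * mdeg a k) := by
  have hN0 : (N0 a k : ℝ) ≠ 0 := Nat.cast_ne_zero.2 (N0_pos (by omega)).ne'
  have hden : (2 * k + 2 : ℝ) - 2 * mdeg a k ≠ 0 := by
    have : (2 * mdeg a k + 2 : ℝ) < 2 * k + 2 := by exact_mod_cast hk
    linarith
  have key := congrArg (Nat.cast : ℕ → ℝ) (N1_mul_eq_N0_mul (a := a) (k := k))
  push_cast [Nat.cast_sub (by omega : mdeg a k + mdeg a k ≤ 2 * k + 2)] at key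
  rw [div_eq_div_iff hN0 hden]
  linear_combination key

/-- For `n` even, `d = (m, m, 1, …, 1)` with `m = ⌊√(a n)⌋`, one has
`N₁/N₀ = m²/(n - 2m)` (for `n - 2m - 2 > 0`), and hence `N₁/N₀ → a` as `n → ∞`. -/
theorem edge_count_ratio (a : ℝ) (ha : 0 < a) :
    (∀ k : ℕ, 2 * mdeg a k + 2 < 2 * k + 2 →
      (N1 a k : ℝ) / (N0 a k : ℝ)
        = (mdeg a k : ℝ) ^ 2 / ((2 * k + 2 : ℝ) - 2 * (mdeg a k : ℝ))) ∧
    Tendsto (fun k => (N1 a k : ℝ) / (N0 a k : ℝ)) atTop (nhds a) :=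
  ⟨fun _ hk => N1_div_N0 hk, ((tendsto_floor_sqrt_sq_div ha).comp tendsto_two_mul_add_two).congr'
    ((eventually_two_mul_mdeg_add_two_lt ha).mono fun _ hk => (N1_div_N0 hk).symm)⟩
end

section
/- Assume Σ_{i=1}^n d_i = Θ(n) and Σ_{i=1}^n d_i² = O(n). Then for every fixed ℓ, m ≥ 0, the random variables X_2 (number of paths with 2 edges) and X_3 (number of paths with 3 edges) in the configuration model multigraph satisfy E[X_2^ℓ X_3^m] = O(n^{ℓ+m}). -/
open Finset Filter

abbrev HalfEdge (n : ℕ) (d : Fin n → ℕ) : Type := Σ i : Fin n, Fin (d i)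

def IsConfig {n : ℕ} {d : Fin n → ℕ} (f : HalfEdge n d → HalfEdge n d) : Prop :=
  (∀ x, f (f x) = x) ∧ (∀ x, f x ≠ x)

instance {n : ℕ} {d : Fin n → ℕ} : DecidablePred (IsConfig (n := n) (d := d)) := fun f => by
  unfold IsConfig; infer_instance

/-- Expectation, over a uniformly random configuration, of `g`. -/
noncomputable def expVal (n : ℕ) (d : Fin n → ℕ) (g : (HalfEdge n d → HalfEdge n d) → ℝ) : ℝ :=
  (∑ f : HalfEdge n d → HalfEdge n d, if IsConfig f then g f else 0) /
    (∑ f : HalfEdge n d → HalfEdge n d, if IsConfig f then (1 : ℝ) else 0)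

/-- The number of paths with 2 edges (`P₂`-subgraphs) of the configuration multigraph:
an ordered pair `(x, y)` of distinct half-edges at a common middle vertex whose
partners lie at two further distinct vertices represents such a path; each path is
counted twice. -/
def numP2 {n : ℕ} {d : Fin n → ℕ} (f : HalfEdge n d → HalfEdge n d) : ℕ :=
  (Finset.univ.filter fun p : HalfEdge n d × HalfEdge n d =>
    p.1.1 = p.2.1 ∧ p.1 ≠ p.2 ∧
    (f p.1).1 ≠ p.1.1 ∧ (f p.2).1 ≠ p.1.1 ∧ (f p.1).1 ≠ (f p.2).1).card / 2

/-- The number of paths with 3 edges (`P₃`-subgraphs) of the configuration multigraph,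
with vertices `v₀ = (f x).1, v₁ = x.1 = y.1, v₂ = (f y).1 = z.1, v₃ = (f z).1` all
distinct; each path is counted twice (once per direction). -/
def numP3 {n : ℕ} {d : Fin n → ℕ} (f : HalfEdge n d → HalfEdge n d) : ℕ :=
  (Finset.univ.filter fun t : HalfEdge n d × HalfEdge n d × HalfEdge n d =>
    t.1.1 = t.2.1.1 ∧ t.1 ≠ t.2.1 ∧ (f t.2.1).1 = t.2.2.1 ∧ t.2.2 ≠ f t.2.1 ∧
    (f t.1).1 ≠ t.1.1 ∧ (f t.1).1 ≠ t.2.2.1 ∧ (f t.1).1 ≠ (f t.2.2).1 ∧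
    t.1.1 ≠ t.2.2.1 ∧ t.1.1 ≠ (f t.2.2).1 ∧ t.2.2.1 ≠ (f t.2.2).1).card / 2

/-!
`X₂` is deterministically at most `∑ dᵢ² = O(n)`, and `X₃` is dominated by the overcount
`W(f) = ∑ₓ d(x) d(f x)` over half-edges `x`, where `d(x)` is the degree of the vertex of `x`. Expanding `W^m`, its expectation is a weighted count of configurations through `m`
prescribed pairs of half-edges. One more prescribed pair `(a, b)` either repeats an earlier one
(at most `2m` choices, of weight at most `max dᵢ² ≤ ∑ dᵢ²`), or is incompatible with them, or
has conditional probability at most `1 / (N - 2m - 1)`: conjugating by the transposition of `b`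
and a fresh `b'` shows that `f a` is no likelier to be `b` than any such `b'`. So each factor of
`W` costs at most `2m ∑ dᵢ² + (∑ dᵢ²)² / (N - 2m - 1) = O(n)`, because `N = ∑ dᵢ ≥ c n`, and
`E[X₂^ℓ X₃^m] ≤ (∑ dᵢ²)^ℓ E[W^m] = O(n^(ℓ+m))`. When `N < 4m` the trivial bound
`X₃ ≤ N³ = O(n)` takes over.
-/

lemma Fin.sum_fin_succ_pi {β M : Type*} [Fintype β] [AddCommMonoid M] {m : ℕ}
    (F : (Fin (m + 1) → β) → M) : ∑ x, F x = ∑ a, ∑ v : Fin m → β, F (Fin.cons a v) := by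
  rw [← (Fin.consEquiv fun _ => β).sum_comp, Fintype.sum_prod_type]
  rfl

section Matching

variable {α : Type*} [DecidableEq α]

def pairsOf {m : ℕ} (y z : Fin m → α) : Finset (α × α) :=
  univ.image (fun t => (y t, z t)) ∪ univ.image (fun t => (z t, y t))

lemma sum_pairsOf_le {m : ℕ} (y z : Fin m → α) {g : α × α → ℝ} (hg : ∀ q, 0 ≤ g q) :
    ∑ q ∈ pairsOf y z, g q ≤ ∑ t, (g (y t, z t) + g (z t, y t)) := by
  rw [sum_add_distrib]
  calc ∑ q ∈ pairsOf y z, g q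
      ≤ ∑ q ∈ pairsOf y z, g q + ∑ q ∈ univ.image (fun t => (y t, z t)) ∩
          univ.image (fun t => (z t, y t)), g q :=
        le_add_of_nonneg_right (sum_nonneg fun q _ => hg q)
    _ = ∑ q ∈ univ.image (fun t => (y t, z t)), g q +
          ∑ q ∈ univ.image (fun t => (z t, y t)), g q := sum_union_inter
    _ ≤ _ := add_le_add (sum_image_le_of_nonneg fun q _ => hg q)
          (sum_image_le_of_nonneg fun q _ => hg q)

variable [Fintype α]

variable (α) in
def matchings : Finset (α → α) :=
  univ.filter fun f => (∀ x, f (f x) = x) ∧ ∀ x, f x ≠ x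

def matchingsThrough {m : ℕ} (y z : Fin m → α) : Finset (α → α) :=
  (matchings α).filter fun f => ∀ t, f (y t) = z t

lemma mem_matchings {f : α → α} :
    f ∈ matchings α ↔ (∀ x, f (f x) = x) ∧ ∀ x, f x ≠ x := by
  simp [matchings]

lemma mem_matchingsThrough {m : ℕ} {y z : Fin m → α} {f : α → α} :
    f ∈ matchingsThrough y z ↔ f ∈ matchings α ∧ ∀ t, f (y t) = z t :=
  mem_filter

lemma matchingsThrough_fin_zero (y z : Fin 0 → α) : matchingsThrough y z = matchings α := by
  simp [matchingsThrough]

lemma matchingsThrough_cons {m : ℕ} (y z : Fin m → α) (a b : α) :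
    matchingsThrough (Fin.cons a y : Fin (m + 1) → α) (Fin.cons b z) =
      (matchingsThrough y z).filter fun f => f a = b := by
  ext f
  simp only [mem_filter, mem_matchingsThrough, Fin.forall_fin_succ, Fin.cons_zero,
    Fin.cons_succ]
  tauto

lemma card_matchingsThrough_cons_le {m : ℕ} (y z : Fin m → α) (a b : α) :
    #(matchingsThrough (Fin.cons a y : Fin (m + 1) → α) (Fin.cons b z)) ≤
      #(matchingsThrough y z) := by
  rw [matchingsThrough_cons]
  exact card_filter_le _ _

lemma fresh_of_notMem_pairsOf {m : ℕ} {y z : Fin m → α} {a b : α} {f : α → α}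
    (hf : f ∈ matchingsThrough y z) (hfa : f a = b) (hab : (a, b) ∉ pairsOf y z) :
    a ≠ b ∧ ∀ t, y t ≠ b ∧ z t ≠ b := by
  obtain ⟨hm, hyz⟩ := mem_matchingsThrough.1 hf
  obtain ⟨hinv, hfix⟩ := mem_matchings.1 hm
  simp only [pairsOf, mem_union, mem_image, mem_univ, true_and, Prod.mk.injEq, not_or,
    not_exists, not_and] at hab
  refine ⟨fun h => hfix a (hfa.trans h.symm), fun t => ⟨?_, ?_⟩⟩
  · rintro rfl; exact hab.2 t (by rw [← hyz t, ← hfa, hinv]) rfl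
  · rintro rfl; exact hab.1 t (Function.Involutive.injective hinv (by rw [hyz t, hfa])) rfl

lemma conj_swap_mem_matchings {f : α → α} (hf : f ∈ matchings α) (b b' : α) :
    (fun x => Equiv.swap b b' (f (Equiv.swap b b' x))) ∈ matchings α := by
  obtain ⟨hinv, hfix⟩ := mem_matchings.1 hf
  refine mem_matchings.2 ⟨fun x => by simp [hinv _], fun x hx => hfix (Equiv.swap b b' x) ?_⟩
  simpa using congrArg (Equiv.swap b b') hx

lemma card_matchingsThrough_cons_le_of_fresh {m : ℕ} {y z : Fin m → α} {a b b' : α}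
    (hb : ∀ t, y t ≠ b ∧ z t ≠ b) (hb' : ∀ t, y t ≠ b' ∧ z t ≠ b')
    (hab : a ≠ b) (hab' : a ≠ b') :
    #(matchingsThrough (Fin.cons a y : Fin (m + 1) → α) (Fin.cons b z)) ≤
      #(matchingsThrough (Fin.cons a y : Fin (m + 1) → α) (Fin.cons b' z)) := by
  set σ := Equiv.swap b b'
  refine card_le_card_of_injOn (fun f x => σ (f (σ x))) (fun f hf => ?_) (fun f _ g _ h => ?_)
  · simp only [mem_coe, matchingsThrough_cons, mem_filter, mem_matchingsThrough] at hf ⊢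
    obtain ⟨⟨hm, hyz⟩, hfa⟩ := hf
    refine ⟨⟨conj_swap_mem_matchings hm b b', fun t => ?_⟩, ?_⟩
    · rw [Equiv.swap_apply_of_ne_of_ne (hb t).1 (hb' t).1, hyz t,
        Equiv.swap_apply_of_ne_of_ne (hb t).2 (hb' t).2]
    · rw [Equiv.swap_apply_of_ne_of_ne hab hab', hfa, Equiv.swap_apply_left]
  · funext x
    simpa [σ] using congrFun h (σ x)

lemma card_sub_mul_card_matchingsThrough_cons_le {m : ℕ} (y z : Fin m → α) {a b : α}
    (hab : (a, b) ∉ pairsOf y z) :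
    (Fintype.card α - (2 * m + 1)) *
        #(matchingsThrough (Fin.cons a y : Fin (m + 1) → α) (Fin.cons b z)) ≤
      #(matchingsThrough y z) := by
  rcases eq_empty_or_nonempty
    (matchingsThrough (Fin.cons a y : Fin (m + 1) → α) (Fin.cons b z)) with h | ⟨f, hf⟩
  · simp [h]
  rw [matchingsThrough_cons, mem_filter] at hf
  obtain ⟨hab, hfresh⟩ := fresh_of_notMem_pairsOf hf.1 hf.2 hab
  set U := univ.image y ∪ univ.image z ∪ {a}
  have hU : #U ≤ 2 * m + 1 := by
    calc #U ≤ #(univ.image y) + #(univ.image z) + 1 := by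
          grw [card_union_le, card_union_le, card_singleton]
      _ ≤ m + m + 1 := by gcongr <;> exact card_image_le.trans (by simp)
      _ = 2 * m + 1 := by ring
  have hfiber : ∀ b' ∈ univ \ U,
      #(matchingsThrough (Fin.cons a y : Fin (m + 1) → α) (Fin.cons b z)) ≤
        #((matchingsThrough y z).filter fun g => g a = b') := by
    intro b' hb'
    simp only [U, Finset.mem_sdiff, mem_univ, mem_union, mem_image, mem_singleton, true_and,
      not_or, not_exists] at hb'
    rw [← matchingsThrough_cons]
    exact card_matchingsThrough_cons_le_of_fresh hfresh (fun t => ⟨hb'.1.1 t, hb'.1.2 t⟩)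
      hab (Ne.symm hb'.2)
  calc (Fintype.card α - (2 * m + 1)) *
        #(matchingsThrough (Fin.cons a y : Fin (m + 1) → α) (Fin.cons b z))
      ≤ #(univ \ U) * #(matchingsThrough (Fin.cons a y : Fin (m + 1) → α) (Fin.cons b z)) := by
        gcongr
        exact (Nat.sub_le_sub_left hU _).trans (le_card_sdiff _ _)
    _ ≤ ∑ b' ∈ univ \ U, #((matchingsThrough y z).filter fun g => g a = b') := by
        rw [← smul_eq_mul, ← sum_const]
        exact sum_le_sum hfiber
    _ ≤ #(matchingsThrough y z) := by
        rw [sum_card_fiberwise_eq_card_filter]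
        exact card_filter_le _ _

lemma card_matchingsThrough_cons_le_div {m : ℕ} (hN : 2 * m + 1 < Fintype.card α)
    {y z : Fin m → α} {a b : α} (hab : (a, b) ∉ pairsOf y z) :
    (#(matchingsThrough (Fin.cons a y : Fin (m + 1) → α) (Fin.cons b z)) : ℝ) ≤
      #(matchingsThrough y z) / (Fintype.card α - (2 * m + 1)) := by
  rw [le_div_iff₀ (by rw [sub_pos]; exact_mod_cast hN), mul_comm]
  have key := Nat.cast_le (α := ℝ).2 (card_sub_mul_card_matchingsThrough_cons_le y z hab)
  rwa [Nat.cast_mul, Nat.cast_sub hN.le, Nat.cast_add, Nat.cast_mul, Nat.cast_ofNat,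
    Nat.cast_one] at key

def matchingWeight (w : α → ℝ) (f : α → α) : ℝ :=
  ∑ x, w x * w (f x)

def forcedMoment (w : α → ℝ) (m : ℕ) : ℝ :=
  ∑ y : Fin m → α, ∑ z : Fin m → α, (∏ t, w (y t) * w (z t)) * #(matchingsThrough y z)

lemma sum_matchingWeight_pow (w : α → ℝ) (m : ℕ) :
    ∑ f ∈ matchings α, matchingWeight w f ^ m = forcedMoment w m := by
  simp only [matchingWeight, sum_pow', Fintype.piFinset_univ, forcedMoment, matchingsThrough,
    card_filter, Nat.cast_sum, Nat.cast_ite, Nat.cast_one, Nat.cast_zero, mul_sum, mul_ite,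
    mul_one, mul_zero]
  rw [sum_comm]
  refine sum_congr rfl fun y _ => ?_
  rw [sum_comm]
  refine sum_congr rfl fun f _ => ?_
  rw [Fintype.sum_eq_single (fun t => f (y t)) fun z hz => if_neg fun h => hz (funext h).symm,
    if_pos fun t => rfl]

lemma forcedMoment_succ (w : α → ℝ) (m : ℕ) :
    forcedMoment w (m + 1) = ∑ y : Fin m → α, ∑ z : Fin m → α, (∏ t, w (y t) * w (z t)) *
      ∑ a, ∑ b, w a * w b * #(matchingsThrough (Fin.cons a y : Fin (m + 1) → α) (Fin.cons b z)) := by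
  simp only [forcedMoment, Fin.sum_fin_succ_pi, Fin.prod_univ_succ, Fin.cons_zero, Fin.cons_succ,
    mul_sum]
  rw [sum_comm]
  refine sum_congr rfl fun y _ => ?_
  rw [sum_congr rfl fun a _ => sum_comm, sum_comm]
  exact sum_congr rfl fun z _ => sum_congr rfl fun a _ => sum_congr rfl fun b _ => by ring

variable {w : α → ℝ} {B : ℝ}

lemma sum_mul_card_matchingsThrough_cons_le (hw : ∀ x, 0 ≤ w x) (hB : ∀ x x', w x * w x' ≤ B)
    {m : ℕ} (hN : 2 * m + 1 < Fintype.card α) (y z : Fin m → α) :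
    ∑ a, ∑ b, w a * w b * #(matchingsThrough (Fin.cons a y : Fin (m + 1) → α) (Fin.cons b z)) ≤
      (2 * m * B + (∑ x, w x) ^ 2 / (Fintype.card α - (2 * m + 1))) *
        #(matchingsThrough y z) := by
  set F : ℝ := ((matchingsThrough y z).card : ℝ)
  set N' : ℝ := Fintype.card α - (2 * m + 1)
  have hN' : 0 < N' := by simp only [N', sub_pos]; exact_mod_cast hN
  have hpoint : ∀ a b, w a * w b * #(matchingsThrough (Fin.cons a y : Fin (m + 1) → α)
      (Fin.cons b z)) ≤ (if (a, b) ∈ pairsOf y z then w a * w b * F else 0) +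
        w a * w b * (F / N') := by
    intro a b
    have hwab : 0 ≤ w a * w b := mul_nonneg (hw a) (hw b)
    split_ifs with hab
    · grw [card_matchingsThrough_cons_le y z a b]
      exact le_add_of_nonneg_right (by positivity)
    · rw [zero_add]
      gcongr
      exact card_matchingsThrough_cons_le_div hN hab
  have hpairs : ∑ a, ∑ b, (if (a, b) ∈ pairsOf y z then w a * w b * F else 0) =
      ∑ q ∈ pairsOf y z, w q.1 * w q.2 * F := by
    rw [← Fintype.sum_prod_type' fun a b => if (a, b) ∈ pairsOf y z then w a * w b * F else 0,
      sum_ite_mem, univ_inter]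
  have hsquare : ∑ a, ∑ b, w a * w b * (F / N') = (∑ x, w x) ^ 2 * (F / N') := by
    rw [sq, sum_mul_sum, sum_mul]
    simp_rw [sum_mul]
  have hF : 0 ≤ F := Nat.cast_nonneg _
  calc ∑ a, ∑ b, w a * w b * #(matchingsThrough (Fin.cons a y : Fin (m + 1) → α) (Fin.cons b z))
      ≤ ∑ a, ∑ b, ((if (a, b) ∈ pairsOf y z then w a * w b * F else 0) +
          w a * w b * (F / N')) := sum_le_sum fun a _ => sum_le_sum fun b _ => hpoint a b
    _ = ∑ q ∈ pairsOf y z, w q.1 * w q.2 * F + (∑ x, w x) ^ 2 * (F / N') := by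
      simp only [sum_add_distrib, hpairs, hsquare]
    _ ≤ ∑ t : Fin m, (B * F + B * F) + (∑ x, w x) ^ 2 * (F / N') := by
      grw [sum_pairsOf_le y z fun q => mul_nonneg (mul_nonneg (hw _) (hw _)) hF]
      gcongr with t <;> exact hB _ _
    _ = (2 * m * B + (∑ x, w x) ^ 2 / N') * F := by
      simp only [sum_const, card_univ, Fintype.card_fin, nsmul_eq_mul]
      ring

lemma forcedMoment_nonneg (hw : ∀ x, 0 ≤ w x) (m : ℕ) : 0 ≤ forcedMoment w m :=
  sum_nonneg fun _ _ => sum_nonneg fun _ _ => mul_nonneg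
    (prod_nonneg fun _ _ => mul_nonneg (hw _) (hw _)) (Nat.cast_nonneg _)

lemma forcedMoment_succ_le (hw : ∀ x, 0 ≤ w x) (hB : ∀ x x', w x * w x' ≤ B)
    {m : ℕ} (hN : 2 * m + 1 < Fintype.card α) :
    forcedMoment w (m + 1) ≤
      (2 * m * B + (∑ x, w x) ^ 2 / (Fintype.card α - (2 * m + 1))) * forcedMoment w m := by
  rw [forcedMoment_succ, forcedMoment, mul_sum]
  refine sum_le_sum fun y _ => ?_
  rw [mul_sum]
  refine sum_le_sum fun z _ => ?_
  have hprod : 0 ≤ ∏ t, w (y t) * w (z t) := prod_nonneg fun t _ => mul_nonneg (hw _) (hw _)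
  grw [sum_mul_card_matchingsThrough_cons_le hw hB hN y z]
  exact (mul_left_comm _ _ _).le

/-- While `4 m ≤ card α`, fewer than `card α / 2` elements are ever forced, so each step costs a
factor at most `2 m B + 2 (∑ w)² / card α`. -/
lemma forcedMoment_le (hw : ∀ x, 0 ≤ w x) (hB : ∀ x x', w x * w x' ≤ B)
    {m : ℕ} (hN : 4 * m ≤ Fintype.card α) :
    forcedMoment w m ≤
      (2 * m * B + 2 * (∑ x, w x) ^ 2 / Fintype.card α) ^ m * #(matchings α) := by
  set N : ℝ := ↑(Fintype.card α)
  set K := 2 * m * B + 2 * (∑ x, w x) ^ 2 / N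
  suffices ∀ j ≤ m, forcedMoment w j ≤ K ^ j * #(matchings α) from this m le_rfl
  intro j
  induction j with
  | zero => intro; simp [forcedMoment, matchingsThrough_fin_zero]
  | succ j ih =>
    intro hj
    have hNj : 4 * (j : ℝ) + 4 ≤ N := by
      simp only [N]; exact_mod_cast (by omega : 4 * j + 4 ≤ Fintype.card α)
    obtain ⟨x⟩ : Nonempty α := Fintype.card_pos_iff.1 (by omega)
    have hB0 : 0 ≤ B := (mul_self_nonneg (w x)).trans (hB x x)
    have hstep : 2 * j * B + (∑ x, w x) ^ 2 / (N - (2 * j + 1)) ≤ K := by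
      have hjm : 2 * j * B ≤ 2 * m * B := by
        gcongr; exact_mod_cast (Nat.le_succ j).trans hj
      have hhalf : (∑ x, w x) ^ 2 / (N - (2 * j + 1)) ≤ 2 * (∑ x, w x) ^ 2 / N :=
        (div_le_div_of_nonneg_left (c := N / 2) (sq_nonneg _) (by linarith) (by linarith)).trans_eq
          (by ring)
      simp only [K]
      linarith
    calc forcedMoment w (j + 1)
        ≤ (2 * j * B + (∑ x, w x) ^ 2 / (N - (2 * j + 1))) * forcedMoment w j :=
          forcedMoment_succ_le hw hB (by omega)
      _ ≤ K * (K ^ j * #(matchings α)) := by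
          have hcoef : 0 ≤ 2 * j * B + (∑ x, w x) ^ 2 / (N - (2 * j + 1)) :=
            add_nonneg (by positivity) (div_nonneg (sq_nonneg _) (by linarith))
          exact mul_le_mul hstep (ih (by omega)) (forcedMoment_nonneg hw j) (hcoef.trans hstep)
      _ = K ^ (j + 1) * #(matchings α) := by ring

end Matching

section HalfEdge

variable {n : ℕ} {d : Fin n → ℕ}

lemma expVal_le_of_sum_le {g : (HalfEdge n d → HalfEdge n d) → ℝ} {B : ℝ} (hB : 0 ≤ B)
    (h : ∑ f ∈ matchings (HalfEdge n d), g f ≤ B * #(matchings (HalfEdge n d))) :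
    expVal n d g ≤ B := by
  have hM : matchings (HalfEdge n d) = univ.filter IsConfig := by
    ext f
    simp [mem_matchings, IsConfig]
  rw [expVal, ← sum_filter, ← sum_filter, ← hM, sum_const, nsmul_one]
  exact div_le_of_le_mul₀ (Nat.cast_nonneg _) hB h

lemma card_halfEdge_fst_eq (i : Fin n) : #{x : HalfEdge n d | i = x.1} = d i := by
  rw [card_filter, Fintype.sum_sigma]
  simp [apply_ite]

lemma sum_degree_halfEdge : ∑ x : HalfEdge n d, (d x.1 : ℝ) = ∑ i, (d i : ℝ) ^ 2 := by
  simp [Fintype.sum_sigma, sq]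

lemma degree_mul_degree_le_sum_sq (a b : HalfEdge n d) :
    (d a.1 : ℝ) * d b.1 ≤ ∑ i, (d i : ℝ) ^ 2 := by
  obtain ⟨k, hak, hbk⟩ : ∃ k, d a.1 ≤ d k ∧ d b.1 ≤ d k := by
    rcases le_total (d a.1) (d b.1) with h | h
    exacts [⟨b.1, h, le_rfl⟩, ⟨a.1, le_rfl, h⟩]
  calc (d a.1 : ℝ) * d b.1 ≤ (d k : ℝ) ^ 2 := by rw [sq]; gcongr
    _ ≤ ∑ i, (d i : ℝ) ^ 2 :=
        single_le_sum (f := fun i => (d i : ℝ) ^ 2) (fun i _ => sq_nonneg _) (mem_univ k)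

lemma numP2_le (f : HalfEdge n d → HalfEdge n d) : numP2 f ≤ ∑ i, d i ^ 2 := by
  calc numP2 f ≤ #{p : HalfEdge n d × HalfEdge n d | p.1.1 = p.2.1} :=
        (Nat.div_le_self _ _).trans (card_le_card fun p hp => by simp_all)
    _ = ∑ i, d i ^ 2 := by
        rw [card_filter, Fintype.sum_prod_type]
        simp only [← card_filter, card_halfEdge_fst_eq, Fintype.sum_sigma]
        simp [sq]

lemma numP3_le (f : HalfEdge n d → HalfEdge n d) : numP3 f ≤ ∑ x, d x.1 * d (f x).1 := by
  calc numP3 f ≤ #{t : HalfEdge n d × HalfEdge n d × HalfEdge n d |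
          t.1.1 = t.2.1.1 ∧ (f t.2.1).1 = t.2.2.1} :=
        (Nat.div_le_self _ _).trans (card_le_card fun p hp => by simp_all)
    _ = ∑ x, d x.1 * d (f x).1 := by
        simp only [card_filter, Fintype.sum_prod_type]
        rw [sum_comm]
        refine sum_congr rfl fun y _ => ?_
        rw [← card_halfEdge_fst_eq (d := d) y.1, ← card_halfEdge_fst_eq (d := d) (f y).1,
          card_filter, card_filter, sum_mul_sum]
        simp only [ite_zero_mul_ite_zero, mul_one, @eq_comm _ y.1]

lemma numP3_le_card_pow (f : HalfEdge n d → HalfEdge n d) :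
    numP3 f ≤ Fintype.card (HalfEdge n d) ^ 3 := by
  calc numP3 f ≤ Fintype.card (HalfEdge n d × HalfEdge n d × HalfEdge n d) :=
        (Nat.div_le_self _ _).trans (card_filter_le _ _)
    _ = Fintype.card (HalfEdge n d) ^ 3 := by simp only [Fintype.card_prod]; ring

lemma sum_numP3_pow_le_of_four_mul_le {m : ℕ} (hm : 4 * m ≤ Fintype.card (HalfEdge n d)) :
    ∑ f ∈ matchings (HalfEdge n d), (numP3 f : ℝ) ^ m ≤
      (2 * m * ∑ i, (d i : ℝ) ^ 2 + 2 * (∑ i, (d i : ℝ) ^ 2) ^ 2 / ∑ i, (d i : ℝ)) ^ m *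
        #(matchings (HalfEdge n d)) := by
  have hN : (Fintype.card (HalfEdge n d) : ℝ) = ∑ i, (d i : ℝ) := by simp
  calc ∑ f ∈ matchings (HalfEdge n d), (numP3 f : ℝ) ^ m
      ≤ ∑ f ∈ matchings (HalfEdge n d), matchingWeight (fun x => (d x.1 : ℝ)) f ^ m := by
        gcongr with f
        simpa [matchingWeight] using (Nat.cast_le (α := ℝ)).2 (numP3_le f)
    _ = forcedMoment (fun x : HalfEdge n d => (d x.1 : ℝ)) m := sum_matchingWeight_pow _ m
    _ ≤ _ := by
        simpa only [sum_degree_halfEdge, hN] using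
          forcedMoment_le (fun _ => Nat.cast_nonneg _) degree_mul_degree_le_sum_sq hm

lemma numP3_le_of_card_lt {m : ℕ} (hm : Fintype.card (HalfEdge n d) < 4 * m)
    (f : HalfEdge n d → HalfEdge n d) : (numP3 f : ℝ) ≤ 16 * m ^ 2 * ∑ i, (d i : ℝ) := by
  have hN : (Fintype.card (HalfEdge n d) : ℝ) = ∑ i, (d i : ℝ) := by simp
  have hNm : (Fintype.card (HalfEdge n d) : ℝ) ≤ 4 * m := by exact_mod_cast hm.le
  calc (numP3 f : ℝ) ≤ (Fintype.card (HalfEdge n d) : ℝ) ^ 2 * Fintype.card (HalfEdge n d) := by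
        rw [← pow_succ]; exact_mod_cast numP3_le_card_pow f
    _ ≤ (4 * m) ^ 2 * Fintype.card (HalfEdge n d) := by gcongr
    _ = 16 * m ^ 2 * ∑ i, (d i : ℝ) := by rw [hN]; ring

lemma sum_numP3_pow_le {c C : ℝ} (hc : 0 < c) (hC : 0 < C)
    (hlow : c * n ≤ ∑ i, (d i : ℝ)) (hup : ∑ i, (d i : ℝ) ≤ C * n)
    (hsq : ∑ i, (d i : ℝ) ^ 2 ≤ C * n) (m : ℕ) :
    ∑ f ∈ matchings (HalfEdge n d), (numP3 f : ℝ) ^ m ≤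
      ((2 * m * C + 2 * C ^ 2 / c + 16 * m ^ 2 * C) * n) ^ m * #(matchings (HalfEdge n d)) := by
  set D := ∑ i, (d i : ℝ) ^ 2
  have hD : 0 ≤ D := sum_nonneg fun i _ => sq_nonneg _
  have hn : (0 : ℝ) ≤ n := Nat.cast_nonneg n
  by_cases hm : 4 * m ≤ Fintype.card (HalfEdge n d)
  · have hsquare : 2 * D ^ 2 / ∑ i, (d i : ℝ) ≤ 2 * C ^ 2 / c * n := by
      refine div_le_of_le_mul₀ (sum_nonneg fun i _ => Nat.cast_nonneg _) (by positivity) ?_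
      calc 2 * D ^ 2 ≤ 2 * (C * n) ^ 2 := by gcongr
        _ = 2 * C ^ 2 / c * n * (c * n) := by field_simp
        _ ≤ 2 * C ^ 2 / c * n * ∑ i, (d i : ℝ) := by gcongr
    grw [sum_numP3_pow_le_of_four_mul_le hm]
    gcongr
    nlinarith
  · calc ∑ f ∈ matchings (HalfEdge n d), (numP3 f : ℝ) ^ m
        ≤ ∑ f ∈ matchings (HalfEdge n d),
            ((2 * m * C + 2 * C ^ 2 / c + 16 * m ^ 2 * C) * n) ^ m := by
          gcongr with f
          grw [numP3_le_of_card_lt (not_le.1 hm) f, hup]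
          have : 0 ≤ (2 * m * C + 2 * C ^ 2 / c) * n := by positivity
          nlinarith
      _ = _ := by rw [sum_const, nsmul_eq_mul, mul_comm]

end HalfEdge

theorem path_count_moments_general
    (d : (n : ℕ) → Fin n → ℕ)
    (c C : ℝ) (hc : 0 < c) (hC : 0 < C)
    (hlow : ∀ n : ℕ, c * n ≤ ∑ i, (d n i : ℝ))
    (hup : ∀ n : ℕ, ∑ i, (d n i : ℝ) ≤ C * n)
    (hsq : ∀ n : ℕ, ∑ i, (d n i : ℝ) ^ 2 ≤ C * n) :
    ∀ ℓ m : ℕ, ∃ C' : ℝ, 0 < C' ∧ ∀ n : ℕ,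
      expVal n (d n) (fun f => (numP2 f : ℝ) ^ ℓ * (numP3 f : ℝ) ^ m)
        ≤ C' * (n : ℝ) ^ (ℓ + m) := by
  intro ℓ m
  refine ⟨C ^ ℓ * (2 * m * C + 2 * C ^ 2 / c + 16 * m ^ 2 * C) ^ m, by positivity, fun n => ?_⟩
  have hP2 : ∀ f : HalfEdge n (d n) → HalfEdge n (d n), (numP2 f : ℝ) ≤ C * n := fun f =>
    le_trans (by exact_mod_cast numP2_le f) (hsq n)
  refine expVal_le_of_sum_le (by positivity) ?_
  calc ∑ f ∈ matchings (HalfEdge n (d n)), (numP2 f : ℝ) ^ ℓ * (numP3 f : ℝ) ^ m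
      ≤ ∑ f ∈ matchings (HalfEdge n (d n)), (C * n) ^ ℓ * (numP3 f : ℝ) ^ m := by
        gcongr with f
        exact hP2 f
    _ ≤ (C * n) ^ ℓ * (((2 * m * C + 2 * C ^ 2 / c + 16 * m ^ 2 * C) * n) ^ m *
          #(matchings (HalfEdge n (d n)))) := by
        rw [← mul_sum]
        gcongr
        exact sum_numP3_pow_le hc hC (hlow n) (hup n) (hsq n) m
    _ = C ^ ℓ * (2 * m * C + 2 * C ^ 2 / c + 16 * m ^ 2 * C) ^ m * n ^ (ℓ + m) *
          #(matchings (HalfEdge n (d n))) := by rw [mul_pow, mul_pow, pow_add]; ring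

/-- If `∑ d i = Θ(n)` and `∑ d i² = O(n)`, then `E[X₂^ℓ X₃^m] = O(n^{ℓ+m})` for every
fixed `ℓ, m ≥ 0`, where `X₂, X₃` are the numbers of 2- and 3-edge paths. -/
theorem path_count_moments
    (d : (n : ℕ) → Fin n → ℕ) (hEven : ∀ n, Even (∑ i, d n i))
    (c C : ℝ) (hc : 0 < c) (hC : 0 < C)
    (hlow : ∀ n : ℕ, c * n ≤ ∑ i, (d n i : ℝ))
    (hup : ∀ n : ℕ, ∑ i, (d n i : ℝ) ≤ C * n)
    (hsq : ∀ n : ℕ, ∑ i, (d n i : ℝ) ^ 2 ≤ C * n) :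
    ∀ ℓ m : ℕ, ∃ C' : ℝ, 0 < C' ∧ ∀ n : ℕ,
      expVal n (d n) (fun f => (numP2 f : ℝ) ^ ℓ * (numP3 f : ℝ) ^ m)
        ≤ C' * (n : ℝ) ^ (ℓ + m) :=
  path_count_moments_general d c C hc hC hlow hup hsq
end

section
/- Assume (1/n)Σ d_i → μ > 0, (1/n)Σ d_i² → μ₂, and max d_i = o(n^{1/2}). Let X̃_3 = Σ_{i<j} Σ_{α=1}^{d_i} Σ_{β=1}^{d_j} (d_i - 1)(d_j - 1) I_{iαjβ}, where I_{iαjβ} indicates half-edges i_α and j_β are matched in the random configuration. Then Var(X̃_3) = o(n²). -/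
open Finset Filter

/-- The overcount `X̃₃ = ∑_{i<j} ∑_{α,β} (dᵢ-1)(dⱼ-1) I_{iαjβ}`, summing over matched
pairs of half-edges `x`, `y` with `x.1 < y.1`. -/
noncomputable def X3tilde (n : ℕ) (d : Fin n → ℕ) (f : HalfEdge n d → HalfEdge n d) : ℝ :=
  ∑ x : HalfEdge n d, ∑ y : HalfEdge n d,
    if x.1 < y.1 ∧ f x = y then ((d x.1 : ℝ) - 1) * ((d y.1 : ℝ) - 1) else 0

/-- The variance of `X̃₃` over a uniformly random configuration. -/
noncomputable def varX3tilde (n : ℕ) (d : Fin n → ℕ) : ℝ :=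
  expVal n d (fun f => (X3tilde n d f) ^ 2) - (expVal n d (X3tilde n d)) ^ 2

/-!
Write `X̃₃ = ∑ₚ wₚ Iₚ` over pairs `p` of half-edges at vertices `i < j`, with
`wₚ = (dᵢ - 1)(dⱼ - 1)`. A uniform perfect matching of the `N` half-edges is invariant under
conjugation by permutations of the half-edges; swapping two candidate partners shows
`E Iₚ = 1/(N-1)` and `E Iₚ I_q = 1/((N-1)(N-3))` for disjoint `p`, `q`, while `Iₚ I_q = 0` for
distinct overlapping pairs. Hence `Var X̃₃ ≤ ∑ wₚ²/(N-1) + 2(∑ wₚ)²/((N-1)²(N-3))`. Since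
`wₚ ≤ (max dᵢ)²` and `∑ wₚ ≤ (∑ dᵢ²)²`, the assumptions `N ~ μn`, `∑ dᵢ² ~ μ₂n` and
`max dᵢ = o(√n)` make both terms `o(n²)`.
-/

open Topology

def perfectMatchings (α : Type*) [Fintype α] [DecidableEq α] : Finset (α → α) :=
  {f | (∀ x, f (f x) = x) ∧ ∀ x, f x ≠ x}

section PerfectMatchings

variable {α : Type*} [Fintype α] [DecidableEq α] {f : α → α}

lemma mem_perfectMatchings : f ∈ perfectMatchings α ↔ (∀ x, f (f x) = x) ∧ ∀ x, f x ≠ x := by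
  simp [perfectMatchings]

lemma conj_mem_perfectMatchings_iff (σ : Equiv.Perm α) :
    σ.conj f ∈ perfectMatchings α ↔ f ∈ perfectMatchings α := by
  simp only [mem_perfectMatchings, Equiv.conj_apply, Equiv.symm_apply_apply, ne_eq,
    ← Equiv.eq_symm_apply]
  exact and_congr (σ.symm.forall_congr_right (q := fun x => f (f x) = x))
    (σ.symm.forall_congr_right (q := fun x => ¬f x = x))

lemma card_filter_perfectMatchings_eq_of_conj (σ : Equiv.Perm α)
    {P Q : (α → α) → Prop} [DecidablePred P] [DecidablePred Q] (h : ∀ f, P f ↔ Q (σ.conj f)) :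
    #{f ∈ perfectMatchings α | P f} = #{f ∈ perfectMatchings α | Q f} :=
  card_equiv σ.conj fun f => by
    simp only [mem_filter, conj_mem_perfectMatchings_iff, h]

/-- Conjugation by `swap v v'` maps the fibre `f u = v'` onto the fibre `f u = v`. -/
lemma card_filter_and_apply_eq_mul_card (P : (α → α) → Prop) [DecidablePred P] {u v : α}
    {T : Finset α} (hT : ∀ f ∈ perfectMatchings α, P f → f u ∈ T) (hv : v ∈ T) (hu : u ∉ T)
    (hP : ∀ v' ∈ T, ∀ f, P (Equiv.conj (Equiv.swap v v') f) ↔ P f) :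
    #{f ∈ perfectMatchings α | P f ∧ f u = v} * #T = #{f ∈ perfectMatchings α | P f} := by
  have hfiber : ∀ v' ∈ T, #{f ∈ {f ∈ perfectMatchings α | P f} | f u = v'}
      = #{f ∈ perfectMatchings α | P f ∧ f u = v} := by
    intro v' hv'
    rw [filter_filter]
    refine (card_filter_perfectMatchings_eq_of_conj (Equiv.swap v v') fun f => ?_).symm
    have hsu : Equiv.swap v v' u = u :=
      Equiv.swap_apply_of_ne_of_ne (ne_of_mem_of_not_mem hv hu).symm
        (ne_of_mem_of_not_mem hv' hu).symm
    simp only [Equiv.conj_apply, Equiv.symm_swap, hsu, hP v' hv', Equiv.swap_apply_eq_iff,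
      Equiv.swap_apply_right]
  rw [card_eq_sum_card_fiberwise (s := {f ∈ perfectMatchings α | P f}) (f := fun f => f u)
    (t := T), sum_congr rfl hfiber, sum_const, smul_eq_mul, mul_comm]
  intro f hf
  rw [coe_filter] at hf
  exact hT f hf.1 hf.2

lemma card_filter_apply_eq_mul {x y : α} (hyx : y ≠ x) :
    (#{f ∈ perfectMatchings α | f x = y} : ℝ) * (Fintype.card α - 1) = #(perfectMatchings α) := by
  have h := card_filter_and_apply_eq_mul_card (fun _ => True) (u := x) (v := y) (T := univ.erase x)
    (fun f hf _ => mem_erase.mpr ⟨(mem_perfectMatchings.mp hf).2 x, mem_univ _⟩)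
    (mem_erase.mpr ⟨hyx, mem_univ y⟩) (notMem_erase x univ) (fun _ _ _ => Iff.rfl)
  have hcard : #(univ.erase x) + 1 = Fintype.card α := card_erase_add_one (mem_univ x)
  simp only [true_and, filter_true] at h
  rw [← h, ← hcard]
  push_cast
  ring

lemma card_filter_apply_eq_and_apply_eq_mul {x y u v : α} (hyx : y ≠ x) (hux : u ≠ x)
    (huy : u ≠ y) (hvx : v ≠ x) (hvy : v ≠ y) (hvu : v ≠ u) :
    (#{f ∈ perfectMatchings α | f x = y ∧ f u = v} : ℝ) * (Fintype.card α - 3)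
      = #{f ∈ perfectMatchings α | f x = y} := by
  have hT : ∀ f ∈ perfectMatchings α, f x = y → f u ∈ univ \ {x, y, u} := by
    intro f hf hfx
    obtain ⟨hinv, hne⟩ := mem_perfectMatchings.mp hf
    have hfy : f y = x := hfx ▸ hinv x
    simp only [Finset.mem_sdiff, mem_univ, mem_insert, mem_singleton, true_and, not_or]
    refine ⟨fun h => huy ?_, fun h => hux ?_, hne u⟩
    · rw [← hinv u, h, hfx]
    · rw [← hinv u, h, hfy]
  have h := card_filter_and_apply_eq_mul_card (fun f => f x = y) (v := v) hT
    (by simp [hvx, hvy, hvu]) (by simp) fun v' hv' f => by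
      simp only [Finset.mem_sdiff, mem_univ, mem_insert, mem_singleton, true_and, not_or] at hv'
      simp only [Equiv.conj_apply, Equiv.symm_swap,
        Equiv.swap_apply_of_ne_of_ne hvx.symm (Ne.symm hv'.1), Equiv.swap_apply_eq_iff,
        Equiv.swap_apply_of_ne_of_ne hvy.symm (Ne.symm hv'.2.1)]
  have hcard : #(univ \ {x, y, u}) + 3 = Fintype.card α := by
    have h3 : #({x, y, u} : Finset α) = 3 := by
      rw [card_insert_of_notMem (by simp [hyx.symm, hux.symm]), card_pair huy.symm]
    have := card_le_univ ({x, y, u} : Finset α)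
    rw [card_univ_sdiff]
    omega
  rw [← h, ← hcard]
  push_cast
  ring

lemma eq_or_eq_swap_of_mem_perfectMatchings (hf : f ∈ perfectMatchings α) {p q : α × α}
    (hp : f p.1 = p.2) (hq : f q.1 = q.2)
    (hshare : q.1 = p.1 ∨ q.1 = p.2 ∨ q.2 = p.1 ∨ q.2 = p.2) : q = p ∨ q = p.swap := by
  obtain ⟨hinv, -⟩ := mem_perfectMatchings.mp hf
  obtain ⟨a, b⟩ := p
  obtain ⟨c, e⟩ := q
  simp only at hp hq hshare
  simp only [Prod.swap_prod_mk, Prod.mk.injEq]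
  grind

end PerfectMatchings

section MatchedWeight

variable {α : Type*} [Fintype α] [DecidableEq α]

def matchedWeight (P : Finset (α × α)) (w : α × α → ℝ) (f : α → α) : ℝ :=
  ∑ p ∈ P, if f p.1 = p.2 then w p else 0

variable {P : Finset (α × α)} {w : α × α → ℝ}

lemma sum_matchedWeight :
    ∑ f ∈ perfectMatchings α, matchedWeight P w f
      = ∑ p ∈ P, w p * #{f ∈ perfectMatchings α | f p.1 = p.2} := by
  simp only [matchedWeight]
  rw [sum_comm]
  refine sum_congr rfl fun p _ => ?_
  rw [← sum_filter, sum_const, nsmul_eq_mul, mul_comm]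

lemma sum_matchedWeight_sq :
    ∑ f ∈ perfectMatchings α, matchedWeight P w f ^ 2
      = ∑ p ∈ P, ∑ q ∈ P, w p * w q * #{f ∈ perfectMatchings α | f p.1 = p.2 ∧ f q.1 = q.2} := by
  simp only [matchedWeight, sq, sum_mul_sum, ite_zero_mul_ite_zero]
  rw [sum_comm]
  refine sum_congr rfl fun p _ => ?_
  rw [sum_comm]
  refine sum_congr rfl fun q _ => ?_
  rw [← sum_filter, sum_const, nsmul_eq_mul, mul_comm]

lemma card_filter_apply_eq_and_apply_eq_le (hN : 3 < Fintype.card α) {p q : α × α}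
    (hp : p.1 ≠ p.2) (hq : q.1 ≠ q.2) (hqp : q ≠ p.swap) :
    (#{f ∈ perfectMatchings α | f p.1 = p.2 ∧ f q.1 = q.2} : ℝ)
      ≤ #(perfectMatchings α) / ((Fintype.card α - 1) * (Fintype.card α - 3))
        + if p = q then (#(perfectMatchings α) : ℝ) / (Fintype.card α - 1) else 0 := by
  have hN' : (3 : ℝ) < Fintype.card α := by exact_mod_cast hN
  have hN1 : (Fintype.card α : ℝ) - 1 ≠ 0 := by linarith
  have hN3 : (Fintype.card α : ℝ) - 3 ≠ 0 := by linarith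
  have hZ : (0 : ℝ) ≤ #(perfectMatchings α) / ((Fintype.card α - 1) * (Fintype.card α - 3)) :=
    div_nonneg (Nat.cast_nonneg _) (mul_nonneg (by linarith) (by linarith))
  by_cases hpq : p = q
  · subst hpq
    simp only [and_self, if_true]
    rw [eq_div_of_mul_eq hN1 (card_filter_apply_eq_mul hp.symm)]
    exact le_add_of_nonneg_left hZ
  rw [if_neg hpq, add_zero]
  by_cases hshare : q.1 = p.1 ∨ q.1 = p.2 ∨ q.2 = p.1 ∨ q.2 = p.2
  · have hempty : #{f ∈ perfectMatchings α | f p.1 = p.2 ∧ f q.1 = q.2} = 0 := by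
      rw [card_eq_zero, filter_eq_empty_iff]
      rintro f hf ⟨hfp, hfq⟩
      rcases eq_or_eq_swap_of_mem_perfectMatchings hf hfp hfq hshare with h | h
      exacts [hpq h.symm, hqp h]
    rwa [hempty, Nat.cast_zero]
  · simp only [not_or] at hshare
    obtain ⟨h11, h12, h21, h22⟩ := hshare
    refine (eq_div_of_mul_eq (mul_ne_zero hN1 hN3) ?_).le
    rw [← card_filter_apply_eq_mul hp.symm,
      ← card_filter_apply_eq_and_apply_eq_mul hp.symm h11 h12 h21 h22 hq.symm]
    ring

lemma sum_matchedWeight_eq (hP : ∀ p ∈ P, p.1 ≠ p.2) (hN : 1 < Fintype.card α) :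
    ∑ f ∈ perfectMatchings α, matchedWeight P w f
      = #(perfectMatchings α) * ((∑ p ∈ P, w p) / (Fintype.card α - 1)) := by
  have hN1 : (Fintype.card α : ℝ) - 1 ≠ 0 := by
    have : (1 : ℝ) < Fintype.card α := by exact_mod_cast hN
    linarith
  rw [sum_matchedWeight, mul_div_assoc', mul_sum, sum_div]
  refine sum_congr rfl fun p hp => ?_
  rw [eq_div_of_mul_eq hN1 (card_filter_apply_eq_mul (hP p hp).symm)]
  ring

lemma sum_matchedWeight_sq_le (hw : ∀ p ∈ P, 0 ≤ w p) (hP : ∀ p ∈ P, p.1 ≠ p.2)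
    (hswap : ∀ p ∈ P, p.swap ∉ P) (hN : 3 < Fintype.card α) :
    ∑ f ∈ perfectMatchings α, matchedWeight P w f ^ 2
      ≤ #(perfectMatchings α) * ((∑ p ∈ P, w p ^ 2) / (Fintype.card α - 1)
        + (∑ p ∈ P, w p) ^ 2 / ((Fintype.card α - 1) * (Fintype.card α - 3))) := by
  set Z : ℝ := (#(perfectMatchings α) : ℝ)
  set N : ℝ := (Fintype.card α : ℝ)
  rw [sum_matchedWeight_sq]
  calc ∑ p ∈ P, ∑ q ∈ P, w p * w q * #{f ∈ perfectMatchings α | f p.1 = p.2 ∧ f q.1 = q.2}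
      ≤ ∑ p ∈ P, ∑ q ∈ P,
          w p * w q * (Z / ((N - 1) * (N - 3)) + if p = q then Z / (N - 1) else 0) := by
        gcongr with p hp q hq
        · exact mul_nonneg (hw p hp) (hw q hq)
        · exact card_filter_apply_eq_and_apply_eq_le hN (hP p hp) (hP q hq)
            fun h => hswap p hp (h ▸ hq)
    _ = _ := by
        simp only [mul_add, mul_ite, mul_zero, sum_add_distrib, sum_ite_eq, sum_ite_mem,
          inter_self, sq, sum_div, mul_sum]
        rw [add_comm]
        congr 1 <;> refine sum_congr rfl fun p _ => ?_
        · ring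
        · rw [sum_mul, sum_div, mul_sum]
          exact sum_congr rfl fun q _ => by ring

lemma matchedWeight_variance_le (hw : ∀ p ∈ P, 0 ≤ w p) (hP : ∀ p ∈ P, p.1 ≠ p.2)
    (hswap : ∀ p ∈ P, p.swap ∉ P) (hN : 3 < Fintype.card α) :
    (∑ f ∈ perfectMatchings α, matchedWeight P w f ^ 2) / #(perfectMatchings α)
        - ((∑ f ∈ perfectMatchings α, matchedWeight P w f) / #(perfectMatchings α)) ^ 2
      ≤ (∑ p ∈ P, w p ^ 2) / (Fintype.card α - 1)
        + 2 * (∑ p ∈ P, w p) ^ 2 / ((Fintype.card α - 1) ^ 2 * (Fintype.card α - 3)) := by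
  have hN' : (3 : ℝ) < Fintype.card α := by exact_mod_cast hN
  have hrhs : 0 ≤ (∑ p ∈ P, w p ^ 2) / (Fintype.card α - 1)
      + 2 * (∑ p ∈ P, w p) ^ 2 / ((Fintype.card α - 1) ^ 2 * (Fintype.card α - 3)) :=
    add_nonneg (div_nonneg (sum_nonneg fun p _ => sq_nonneg _) (by linarith))
      (div_nonneg (by positivity) (mul_nonneg (sq_nonneg _) (by linarith)))
  rcases eq_or_ne (#(perfectMatchings α) : ℝ) 0 with hZ | hZ
  -- no perfect matching exists (odd `N`): both averages are the junk value `0 / 0 = 0`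
  · simpa [hZ] using hrhs
  have hsecond := div_le_div_of_nonneg_right (sum_matchedWeight_sq_le hw hP hswap hN)
    (Nat.cast_nonneg #(perfectMatchings α))
  rw [mul_div_cancel_left₀ _ hZ] at hsecond
  rw [sum_matchedWeight_eq hP (by omega), mul_div_cancel_left₀ _ hZ]
  calc _ ≤ (∑ p ∈ P, w p ^ 2) / (Fintype.card α - 1)
        + (∑ p ∈ P, w p) ^ 2 / ((Fintype.card α - 1) * (Fintype.card α - 3))
        - ((∑ p ∈ P, w p) / (Fintype.card α - 1)) ^ 2 := sub_le_sub_right hsecond _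
    _ = _ := by
      have hN1 : (Fintype.card α : ℝ) - 1 ≠ 0 := by linarith
      have hN3 : (Fintype.card α : ℝ) - 3 ≠ 0 := by linarith
      field_simp
      ring

end MatchedWeight

section X3tilde

variable {n : ℕ} {d : Fin n → ℕ}

def crossPairs (n : ℕ) (d : Fin n → ℕ) : Finset (HalfEdge n d × HalfEdge n d) :=
  {p | p.1.1 < p.2.1}

noncomputable def excessWeight (n : ℕ) (d : Fin n → ℕ) (p : HalfEdge n d × HalfEdge n d) : ℝ :=
  ((d p.1.1 : ℝ) - 1) * ((d p.2.1 : ℝ) - 1)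

lemma mem_crossPairs {p : HalfEdge n d × HalfEdge n d} : p ∈ crossPairs n d ↔ p.1.1 < p.2.1 := by
  simp [crossPairs]

lemma X3tilde_eq_matchedWeight (f : HalfEdge n d → HalfEdge n d) :
    X3tilde n d f = matchedWeight (crossPairs n d) (excessWeight n d) f := by
  rw [X3tilde, matchedWeight, crossPairs, sum_filter, ← univ_product_univ, sum_product]
  simp only [ite_and, excessWeight]

lemma expVal_eq_sum_div (g : (HalfEdge n d → HalfEdge n d) → ℝ) :
    expVal n d g = (∑ f ∈ perfectMatchings _, g f) / #(perfectMatchings (HalfEdge n d)) := by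
  have h : perfectMatchings (HalfEdge n d) = univ.filter IsConfig := by
    ext f; simp [mem_perfectMatchings, IsConfig]
  rw [expVal, h, sum_filter, card_filter, Nat.cast_sum]
  simp

lemma one_le_deg (x : HalfEdge n d) : (1 : ℝ) ≤ d x.1 := Nat.one_le_cast.mpr x.2.pos

lemma excessWeight_nonneg (p : HalfEdge n d × HalfEdge n d) : 0 ≤ excessWeight n d p :=
  mul_nonneg (sub_nonneg.mpr (one_le_deg p.1)) (sub_nonneg.mpr (one_le_deg p.2))

lemma excessWeight_le_sup_sq (p : HalfEdge n d × HalfEdge n d) :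
    excessWeight n d p ≤ ((univ.sup d : ℕ) : ℝ) ^ 2 := by
  have hle : ∀ x : HalfEdge n d, (d x.1 : ℝ) - 1 ≤ (univ.sup d : ℕ) := fun x => by
    have : (d x.1 : ℝ) ≤ (univ.sup d : ℕ) := Nat.cast_le.mpr (le_sup (mem_univ _))
    linarith
  rw [excessWeight, sq]
  exact mul_le_mul (hle p.1) (hle p.2) (sub_nonneg.mpr (one_le_deg p.2)) (Nat.cast_nonneg _)

lemma sum_deg_sub_one_le : ∑ x : HalfEdge n d, ((d x.1 : ℝ) - 1) ≤ ∑ i, (d i : ℝ) ^ 2 := by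
  rw [Fintype.sum_sigma]
  refine sum_le_sum fun i _ => ?_
  simp only [sum_const, card_univ, Fintype.card_fin, nsmul_eq_mul]
  nlinarith [(Nat.cast_nonneg (d i) : (0 : ℝ) ≤ d i)]

lemma sum_excessWeight_le : ∑ p ∈ crossPairs n d, excessWeight n d p ≤ (∑ i, (d i : ℝ) ^ 2) ^ 2 :=
  calc ∑ p ∈ crossPairs n d, excessWeight n d p
      ≤ ∑ p : HalfEdge n d × HalfEdge n d, excessWeight n d p :=
        sum_le_sum_of_subset_of_nonneg (subset_univ _) fun p _ _ => excessWeight_nonneg p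
    _ = (∑ x : HalfEdge n d, ((d x.1 : ℝ) - 1)) ^ 2 := by
        rw [sq, sum_mul_sum, ← Fintype.sum_prod_type']; rfl
    _ ≤ (∑ i, (d i : ℝ) ^ 2) ^ 2 :=
        pow_le_pow_left₀ (sum_nonneg fun x _ => sub_nonneg.mpr (one_le_deg x)) sum_deg_sub_one_le 2

lemma sum_excessWeight_sq_le : ∑ p ∈ crossPairs n d, excessWeight n d p ^ 2
    ≤ ((univ.sup d : ℕ) : ℝ) ^ 2 * (∑ i, (d i : ℝ) ^ 2) ^ 2 :=
  calc ∑ p ∈ crossPairs n d, excessWeight n d p ^ 2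
      ≤ ∑ p ∈ crossPairs n d, ((univ.sup d : ℕ) : ℝ) ^ 2 * excessWeight n d p :=
        sum_le_sum fun p _ => by
          rw [sq (excessWeight n d p)]
          exact mul_le_mul_of_nonneg_right (excessWeight_le_sup_sq p) (excessWeight_nonneg p)
    _ ≤ ((univ.sup d : ℕ) : ℝ) ^ 2 * (∑ i, (d i : ℝ) ^ 2) ^ 2 := by
        rw [← mul_sum]
        exact mul_le_mul_of_nonneg_left sum_excessWeight_le (sq_nonneg _)

lemma varX3tilde_nonneg : 0 ≤ varX3tilde n d := by
  rw [varX3tilde, expVal_eq_sum_div, expVal_eq_sum_div, sub_nonneg]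
  exact sum_div_card_sq_le_sum_sq_div_card

lemma varX3tilde_le (hN : 3 < Fintype.card (HalfEdge n d)) :
    varX3tilde n d ≤ ((univ.sup d : ℕ) : ℝ) ^ 2 * (∑ i, (d i : ℝ) ^ 2) ^ 2
        / (Fintype.card (HalfEdge n d) - 1)
      + 2 * (∑ i, (d i : ℝ) ^ 2) ^ 4
        / ((Fintype.card (HalfEdge n d) - 1) ^ 2 * (Fintype.card (HalfEdge n d) - 3)) := by
  have hN' : (3 : ℝ) < Fintype.card (HalfEdge n d) := by exact_mod_cast hN
  have hvar := matchedWeight_variance_le (P := crossPairs n d) (fun p _ => excessWeight_nonneg p)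
    (fun p hp h => (mem_crossPairs.mp hp).ne (congrArg Sigma.fst h))
    (fun p hp hswap => lt_asymm (mem_crossPairs.mp hp) (mem_crossPairs.mp hswap)) hN
  simp only [← X3tilde_eq_matchedWeight, ← expVal_eq_sum_div] at hvar
  refine hvar.trans (add_le_add ?_ ?_)
  · exact div_le_div_of_nonneg_right sum_excessWeight_sq_le (by linarith)
  · refine div_le_div_of_nonneg_right ?_ (by positivity)
    calc 2 * (∑ p ∈ crossPairs n d, excessWeight n d p) ^ 2
        ≤ 2 * ((∑ i, (d i : ℝ) ^ 2) ^ 2) ^ 2 := by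
          gcongr
          · exact sum_nonneg fun p _ => excessWeight_nonneg p
          · exact sum_excessWeight_le
      _ = 2 * (∑ i, (d i : ℝ) ^ 2) ^ 4 := by ring

end X3tilde

lemma tendsto_variance_bound_div_sq {N S M : ℕ → ℝ} {μ μ₂ : ℝ} (hμ : 0 < μ)
    (hN : Tendsto (fun n : ℕ => N n / n) atTop (𝓝 μ))
    (hS : Tendsto (fun n : ℕ => S n / n) atTop (𝓝 μ₂))
    (hM : Tendsto (fun n : ℕ => M n / Real.sqrt n) atTop (𝓝 0)) :
    Tendsto (fun n : ℕ => (M n ^ 2 * S n ^ 2 / (N n - 1)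
      + 2 * S n ^ 4 / ((N n - 1) ^ 2 * (N n - 3))) / n ^ 2) atTop (𝓝 0) := by
  have hinv : ∀ c : ℝ, Tendsto (fun n : ℕ => n / (N n - c)) atTop (𝓝 μ⁻¹) := fun c => by
    have h := (hN.sub (tendsto_const_div_atTop_nhds_zero_nat c)).inv₀ (by simpa using hμ.ne')
    rw [sub_zero] at h
    exact h.congr fun n => by rw [← sub_div, inv_div]
  have hlim := ((hM.pow 2).mul (hS.pow 2)).mul (hinv 1) |>.add
    ((((hS.pow 4).const_mul 2).mul ((hinv 1).pow 2)).mul (hinv 3) |>.mul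
      tendsto_one_div_atTop_nhds_zero_nat)
  rw [show (0 : ℝ) ^ 2 * μ₂ ^ 2 * μ⁻¹ + 2 * μ₂ ^ 4 * μ⁻¹ ^ 2 * μ⁻¹ * 0 = 0 by ring] at hlim
  refine hlim.congr' ?_
  filter_upwards [eventually_gt_atTop 0] with n hn
  have hn' : (0 : ℝ) < n := Nat.cast_pos.mpr hn
  rw [div_pow (M n), Real.sq_sqrt hn'.le]
  field_simp

theorem variance_X3tilde_small_general
    (d : (n : ℕ) → Fin n → ℕ)
    (μ μ₂ : ℝ) (hμ : 0 < μ)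
    (h1 : Tendsto (fun n : ℕ => (∑ i, (d n i : ℝ)) / n) atTop (nhds μ))
    (h2 : Tendsto (fun n : ℕ => (∑ i, (d n i : ℝ) ^ 2) / n) atTop (nhds μ₂))
    (hmax : Tendsto (fun n : ℕ => ((Finset.univ.sup (d n) : ℕ) : ℝ) / Real.sqrt n)
      atTop (nhds 0)) :
    Tendsto (fun n : ℕ => varX3tilde n (d n) / (n : ℝ) ^ 2) atTop (nhds 0) := by
  have hcard : ∀ n, (Fintype.card (HalfEdge n (d n)) : ℝ) = ∑ i, (d n i : ℝ) := fun n => by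
    simp [Fintype.card_sigma]
  have hlarge : ∀ᶠ n in atTop, 3 < Fintype.card (HalfEdge n (d n)) := by
    have hN : Tendsto (fun n : ℕ => ∑ i, (d n i : ℝ)) atTop atTop :=
      (h1.pos_mul_atTop hμ tendsto_natCast_atTop_atTop).congr' <| by
        filter_upwards [eventually_ne_atTop 0] with n hn
        field_simp
    filter_upwards [hN.eventually_gt_atTop 3] with n hn
    exact_mod_cast (hcard n).symm ▸ hn
  refine tendsto_of_tendsto_of_tendsto_of_le_of_le' tendsto_const_nhds
    (tendsto_variance_bound_div_sq hμ h1 h2 hmax)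
    (Eventually.of_forall fun n => div_nonneg varX3tilde_nonneg (sq_nonneg _)) ?_
  filter_upwards [hlarge] with n hn
  have hvar := varX3tilde_le hn
  rw [hcard n] at hvar
  exact div_le_div_of_nonneg_right hvar (sq_nonneg _)

/-- Assume `(1/n) ∑ d i → μ > 0`, `(1/n) ∑ d i² → μ₂` and `max d i = o(√n)`.
Then `Var(X̃₃) = o(n²)`. -/
theorem variance_X3tilde_small
    (d : (n : ℕ) → Fin n → ℕ) (hEven : ∀ n, Even (∑ i, d n i))
    (μ μ₂ : ℝ) (hμ : 0 < μ)
    (h1 : Tendsto (fun n : ℕ => (∑ i, (d n i : ℝ)) / n) atTop (nhds μ))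
    (h2 : Tendsto (fun n : ℕ => (∑ i, (d n i : ℝ) ^ 2) / n) atTop (nhds μ₂))
    (hmax : Tendsto (fun n : ℕ => ((Finset.univ.sup (d n) : ℕ) : ℝ) / Real.sqrt n)
      atTop (nhds 0)) :
    Tendsto (fun n : ℕ => varX3tilde n (d n) / (n : ℝ) ^ 2) atTop (nhds 0) :=
  variance_X3tilde_small_general d μ μ₂ hμ h1 h2 hmax
end

section
/- Assume the degree sequences satisfy (1/n)Σ d_i → μ ∈ (0,∞) and (1/n)Σ d_i² → μ₂ < ∞ with ν := μ₂ - μ = 0. Then the probability that the configuration model multigraph is simple tends to 1, i.e., P(L = 0 and M = 0) → 1, where L is the number of loops and M the number of pairs of parallel edges. -/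
open Finset Filter

/-- Probability, over a uniformly random configuration, of the event `P`. -/
noncomputable def probConf (n : ℕ) (d : Fin n → ℕ)
    (P : (HalfEdge n d → HalfEdge n d) → Prop) [DecidablePred P] : ℝ :=
  (∑ f : HalfEdge n d → HalfEdge n d, if IsConfig f ∧ P f then (1 : ℝ) else 0) /
    (∑ f : HalfEdge n d → HalfEdge n d, if IsConfig f then (1 : ℝ) else 0)

/-- Number of loops of the configuration multigraph. -/
def numLoops {n : ℕ} {d : Fin n → ℕ} (f : HalfEdge n d → HalfEdge n d) : ℕ :=
  (Finset.univ.filter fun x : HalfEdge n d => (f x).1 = x.1).card / 2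

/-- Number of unordered pairs of parallel edges of the configuration multigraph. -/
def numParallelPairs {n : ℕ} {d : Fin n → ℕ} (f : HalfEdge n d → HalfEdge n d) : ℕ :=
  (Finset.univ.filter fun p : HalfEdge n d × HalfEdge n d =>
    p.1.1 = p.2.1 ∧ p.1 ≠ p.2 ∧ (f p.1).1 = (f p.2).1 ∧ p.1.1 < (f p.1).1).card / 2

/-!
Let `N = ∑ dᵢ` be the number of half-edges and `S = ∑ dᵢ (dᵢ - 1)` the number of ordered pairs
of distinct half-edges at a common vertex. Conjugation by a transposition of half-edges permutes
the configurations, so the partner `f x` of a half-edge is uniform on the other `N - 1`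
half-edges, and given `f x₁ = y₁` the partner of another half-edge `x₂` is uniform on the
`N - 3` half-edges other than `x₁, x₂, y₁`. A loop matches the two half-edges of such a pair, and two parallel edges match
two such pairs at different vertices, so the union bound gives `P(L ≠ 0) ≤ S / (N - 1)` and
`P(M ≠ 0) ≤ S² / ((N - 1)(N - 3))`. Both tend to `0`, because `S / n → μ₂ - μ = 0` while
`N / n → μ > 0`.
-/

theorem Nat.cast_mul_cast_sub_one {R : Type*} [Ring R] (m : ℕ) :
    (m : R) * ((m - 1 : ℕ) : R) = m * (m - 1) := by
  cases m <;> simp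

namespace ConfigurationModel

variable {n : ℕ} {d : Fin n → ℕ}

theorem card_halfEdge : Fintype.card (HalfEdge n d) = ∑ i, d i := by
  simp [Fintype.card_sigma]

theorem exists_isConfig (hEven : Even (∑ i, d i)) :
    ∃ f : HalfEdge n d → HalfEdge n d, IsConfig f := by
  obtain ⟨k, hk⟩ := hEven
  let e : HalfEdge n d ≃ Fin k ⊕ Fin k :=
    (Fintype.equivFinOfCardEq (card_halfEdge.trans hk)).trans finSumFinEquiv.symm
  refine ⟨fun x => e.symm (e x).swap, fun x => by simp, fun x hx => ?_⟩
  have := congrArg e hx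
  rcases h : e x <;> simp [h] at this

theorem _root_.IsConfig.arrowCongr {f : HalfEdge n d → HalfEdge n d}
    (σ : Equiv.Perm (HalfEdge n d)) (hf : IsConfig f) : IsConfig (σ.arrowCongr σ f) :=
  ⟨fun x => by simp [hf.1], fun x hx => hf.2 (σ.symm x) (by simpa using congrArg σ.symm hx)⟩

theorem isConfig_arrowCongr_iff {f : HalfEdge n d → HalfEdge n d}
    (σ : Equiv.Perm (HalfEdge n d)) : IsConfig (σ.arrowCongr σ f) ↔ IsConfig f :=
  ⟨fun h => by
    simpa only [← Equiv.arrowCongr_symm, Equiv.symm_apply_apply] using h.arrowCongr σ.symm,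
   fun h => h.arrowCongr σ⟩

noncomputable def numConfigs (n : ℕ) (d : Fin n → ℕ)
    (P : (HalfEdge n d → HalfEdge n d) → Prop) : ℕ :=
  Nat.card {f : HalfEdge n d → HalfEdge n d // IsConfig f ∧ P f}

theorem numConfigs_eq_card (P : (HalfEdge n d → HalfEdge n d) → Prop) [DecidablePred P] :
    numConfigs n d P = #{f | IsConfig f ∧ P f} := by
  rw [numConfigs, Nat.card_eq_fintype_card, Fintype.card_subtype]

theorem probConf_eq_div (P : (HalfEdge n d → HalfEdge n d) → Prop) [DecidablePred P] :
    probConf n d P = (numConfigs n d P : ℝ) / numConfigs n d fun _ => True := by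
  simp [probConf, Finset.sum_boole, numConfigs_eq_card]

theorem numConfigs_mono {P Q : (HalfEdge n d → HalfEdge n d) → Prop} (h : ∀ f, P f → Q f) :
    numConfigs n d P ≤ numConfigs n d Q :=
  Nat.card_mono (Set.toFinite _) fun f hf => ⟨hf.1, h f hf.2⟩

theorem probConf_le_one (P : (HalfEdge n d → HalfEdge n d) → Prop) [DecidablePred P] :
    probConf n d P ≤ 1 := by
  rw [probConf_eq_div]
  exact div_le_one_of_le₀ (by exact_mod_cast numConfigs_mono fun _ _ => trivial)
    (Nat.cast_nonneg _)

theorem numConfigs_arrowCongr (σ : Equiv.Perm (HalfEdge n d))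
    (P : (HalfEdge n d → HalfEdge n d) → Prop) :
    numConfigs n d (fun f => P (σ.arrowCongr σ f)) = numConfigs n d P :=
  Nat.card_congr <| .subtypeEquiv (σ.arrowCongr σ) fun _ => by rw [isConfig_arrowCongr_iff]

theorem sum_numConfigs_and_apply_eq (Q : (HalfEdge n d → HalfEdge n d) → Prop)
    (x : HalfEdge n d) :
    ∑ z, numConfigs n d (fun f => Q f ∧ f x = z) = numConfigs n d Q := by
  classical
  simp only [numConfigs_eq_card]
  rw [card_eq_sum_card_fiberwise (f := fun f => f x) fun _ _ => mem_univ _]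
  simp only [filter_filter, and_assoc]

theorem card_sub_mul_numConfigs_and_apply_eq (Q : (HalfEdge n d → HalfEdge n d) → Prop)
    {x z : HalfEdge n d} {S : Finset (HalfEdge n d)} (hx : x ∈ S) (hz : z ∉ S)
    (hS : ∀ f, IsConfig f → Q f → f x ∉ S)
    (hQ : ∀ a ∉ S, ∀ b ∉ S, ∀ f, Q ((Equiv.swap a b).arrowCongr (Equiv.swap a b) f) ↔ Q f) :
    (Fintype.card (HalfEdge n d) - #S) * numConfigs n d (fun f => Q f ∧ f x = z) =
      numConfigs n d Q := by
  have hzero : ∀ w ∈ S, numConfigs n d (fun f => Q f ∧ f x = w) = 0 := fun w hw =>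
    Nat.card_eq_zero.mpr (.inl ⟨fun f => hS f.1 f.2.1 f.2.2.1 (f.2.2.2.symm ▸ hw)⟩)
  have hconst : ∀ w ∈ Sᶜ, numConfigs n d (fun f => Q f ∧ f x = w) =
      numConfigs n d (fun f => Q f ∧ f x = z) := by
    intro w hw
    rw [mem_compl] at hw
    rw [← numConfigs_arrowCongr (Equiv.swap w z)]
    have hxw : Equiv.swap w z x = x :=
      Equiv.swap_apply_of_ne_of_ne (ne_of_mem_of_not_mem hx hw) (ne_of_mem_of_not_mem hx hz)
    congr! 2 with f
    simp [hQ w hw z hz, hxw, Equiv.swap_apply_eq_iff]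
  rw [← sum_numConfigs_and_apply_eq Q x, ← sum_compl_add_sum S, sum_eq_zero hzero, add_zero,
    sum_congr rfl hconst, sum_const, card_compl, smul_eq_mul]

theorem card_pred_mul_numConfigs_apply_eq {x y : HalfEdge n d} (hxy : x ≠ y) :
    (Fintype.card (HalfEdge n d) - 1) * numConfigs n d (fun f => f x = y) =
      numConfigs n d fun _ => True := by
  simpa using card_sub_mul_numConfigs_and_apply_eq (fun _ => True) (mem_singleton_self x)
    (by simpa using hxy.symm) (fun f hf _ => by simpa using hf.2 x) (by simp)

theorem card_pred_mul_card_sub_three_mul_numConfigs_apply_apply_eq {x₁ x₂ y₁ y₂ : HalfEdge n d}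
    (hx : x₁ ≠ x₂) (hy : y₁ ≠ y₂) (h₁₁ : x₁ ≠ y₁) (h₁₂ : x₁ ≠ y₂) (h₂₁ : x₂ ≠ y₁)
    (h₂₂ : x₂ ≠ y₂) :
    (Fintype.card (HalfEdge n d) - 1) * (Fintype.card (HalfEdge n d) - 3) *
      numConfigs n d (fun f => f x₁ = y₁ ∧ f x₂ = y₂) = numConfigs n d fun _ => True := by
  have hS : #{x₁, x₂, y₁} = 3 := card_eq_three.mpr ⟨x₁, x₂, y₁, hx, h₁₁, h₂₁, rfl⟩
  have hfix : ∀ a ∉ ({x₁, x₂, y₁} : Finset _), ∀ b ∉ ({x₁, x₂, y₁} : Finset _),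
      ∀ c ∈ ({x₁, y₁} : Finset _), Equiv.swap a b c = c := by
    intro a ha b hb c hc
    exact Equiv.swap_apply_of_ne_of_ne (by grind) (by grind)
  rw [mul_assoc, ← hS, card_sub_mul_numConfigs_and_apply_eq (fun f => f x₁ = y₁) (by simp)
    (by simp [h₁₂.symm, h₂₂.symm, hy.symm]), card_pred_mul_numConfigs_apply_eq h₁₁]
  · intro f hf hfx
    simp only [mem_insert, mem_singleton, not_or]
    refine ⟨fun h => h₂₁ ?_, hf.2 x₂, fun h => hx (?_)⟩
    · rw [← hfx, ← h, hf.1]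
    · rw [← hf.1 x₁, hfx, ← h, hf.1]
  · intro a ha b hb f
    simp [hfix a ha b hb x₁ (by simp), Equiv.swap_apply_eq_iff, hfix a ha b hb y₁ (by simp)]

theorem numConfigs_le_sum {ι : Type*} (s : Finset ι) {A : (HalfEdge n d → HalfEdge n d) → Prop}
    {B : ι → (HalfEdge n d → HalfEdge n d) → Prop} (h : ∀ f, IsConfig f → A f → ∃ i ∈ s, B i f) :
    numConfigs n d A ≤ ∑ i ∈ s, numConfigs n d (B i) := by
  classical
  simp only [numConfigs_eq_card]
  refine (card_le_card fun f hf => ?_).trans card_biUnion_le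
  simp only [mem_filter, mem_univ, true_and] at hf
  obtain ⟨i, hi, hB⟩ := h f hf.1 hf.2
  exact mem_biUnion.mpr ⟨i, hi, by simp [hf.1, hB]⟩

theorem numConfigs_le_add {A B C : (HalfEdge n d → HalfEdge n d) → Prop}
    (h : ∀ f, IsConfig f → A f → B f ∨ C f) :
    numConfigs n d A ≤ numConfigs n d B + numConfigs n d C := by
  classical
  simp only [numConfigs_eq_card]
  refine (card_le_card fun f hf => ?_).trans (card_union_le _ _)
  simp only [mem_filter, mem_union, mem_univ, true_and] at hf ⊢
  grind

theorem mul_numConfigs_le_card_mul {ι : Type*} (s : Finset ι) (c : ℕ)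
    {A : (HalfEdge n d → HalfEdge n d) → Prop} {B : ι → (HalfEdge n d → HalfEdge n d) → Prop}
    (h : ∀ f, IsConfig f → A f → ∃ i ∈ s, B i f)
    (hB : ∀ i ∈ s, c * numConfigs n d (B i) = numConfigs n d fun _ => True) :
    c * numConfigs n d A ≤ #s * numConfigs n d fun _ => True :=
  calc c * numConfigs n d A ≤ c * ∑ i ∈ s, numConfigs n d (B i) :=
        Nat.mul_le_mul_left c (numConfigs_le_sum s h)
    _ = #s * numConfigs n d fun _ => True := by
        rw [mul_sum, sum_congr rfl hB, sum_const, smul_eq_mul]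

variable (n d) in
def sameVertexPairs : Finset (HalfEdge n d × HalfEdge n d) :=
  {p | p.1.1 = p.2.1 ∧ p.1 ≠ p.2}

theorem card_sameVertexPairs : #(sameVertexPairs n d) = ∑ i, d i * (d i - 1) := by
  have hfiber : ∀ x : HalfEdge n d, #{y | x.1 = y.1 ∧ x ≠ y} = d x.1 - 1 := by
    intro x
    rw [show ({y | x.1 = y.1 ∧ x ≠ y} : Finset (HalfEdge n d)) =
        (univ.filter fun y : HalfEdge n d => y.1 = x.1).erase x by
      ext y; simp only [mem_filter, mem_erase, mem_univ, true_and]; grind]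
    rw [card_erase_of_mem (by simp), card_filter, Fintype.sum_sigma]
    simp [apply_ite]
  rw [sameVertexPairs, card_filter, Fintype.sum_prod_type]
  simp_rw [← card_filter, hfiber, Fintype.sum_sigma]
  simp

theorem card_pred_mul_numConfigs_numLoops_ne_zero_le :
    (Fintype.card (HalfEdge n d) - 1) * numConfigs n d (fun f => numLoops f ≠ 0) ≤
      (∑ i, d i * (d i - 1)) * numConfigs n d fun _ => True := by
  rw [← card_sameVertexPairs]
  refine mul_numConfigs_le_card_mul _ _ (B := fun p f => f p.1 = p.2) (fun f hf hL => ?_)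
    fun p hp => card_pred_mul_numConfigs_apply_eq (mem_filter.mp hp).2.2
  obtain ⟨x, hx⟩ : ∃ x : HalfEdge n d, (f x).1 = x.1 := by
    by_contra h
    exact hL (by simp [numLoops, filter_false_of_mem fun x _ hx => h ⟨x, hx⟩])
  exact ⟨(x, f x), by simp [sameVertexPairs, hx, (hf.2 x).symm], rfl⟩

theorem card_pred_mul_card_sub_three_mul_numConfigs_numParallelPairs_ne_zero_le :
    (Fintype.card (HalfEdge n d) - 1) * (Fintype.card (HalfEdge n d) - 3) *
        numConfigs n d (fun f => numParallelPairs f ≠ 0) ≤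
      (∑ i, d i * (d i - 1)) ^ 2 * numConfigs n d fun _ => True := by
  let s := (sameVertexPairs n d ×ˢ sameVertexPairs n d).filter fun q => q.1.1.1 ≠ q.2.1.1
  have hs : #s ≤ (∑ i, d i * (d i - 1)) ^ 2 := by
    rw [← card_sameVertexPairs, sq, ← card_product]
    exact card_filter_le _ _
  refine (mul_numConfigs_le_card_mul s _ (B := fun q f => f q.1.1 = q.2.1 ∧ f q.1.2 = q.2.2)
    (fun f hf hM => ?_) fun ⟨⟨x₁, x₂⟩, y₁, y₂⟩ hq => ?_).trans (Nat.mul_le_mul_right _ hs)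
  · obtain ⟨p, hp⟩ : ∃ p : HalfEdge n d × HalfEdge n d,
        p.1.1 = p.2.1 ∧ p.1 ≠ p.2 ∧ (f p.1).1 = (f p.2).1 ∧ p.1.1 < (f p.1).1 := by
      by_contra h
      exact hM (by simp [numParallelPairs, filter_false_of_mem fun p _ hp => h ⟨p, hp⟩])
    obtain ⟨hv, hne, hfv, hlt⟩ := hp
    have hfne : f p.1 ≠ f p.2 := fun h => hne (by rw [← hf.1 p.1, h, hf.1])
    refine ⟨((p.1, p.2), (f p.1, f p.2)),
      mem_filter.mpr ⟨mem_product.mpr ⟨?_, ?_⟩, hlt.ne⟩, rfl, rfl⟩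
    · simp [sameVertexPairs, hv, hne]
    · simp [sameVertexPairs, hfv, hfne]
  · simp only [s, sameVertexPairs, mem_filter, mem_product, mem_univ, true_and] at hq
    obtain ⟨⟨⟨hx, hxne⟩, ⟨hy, hyne⟩⟩, hxy⟩ := hq
    refine card_pred_mul_card_sub_three_mul_numConfigs_apply_apply_eq hxne hyne ?_ ?_ ?_ ?_ <;>
      exact ne_of_apply_ne Sigma.fst (by grind)

theorem one_sub_le_probConf_simple (hEven : Even (∑ i, d i)) (hN : 4 ≤ ∑ i, d i) :
    1 - (∑ i, (d i : ℝ) * (d i - 1)) / (∑ i, (d i : ℝ) - 1) -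
        (∑ i, (d i : ℝ) * (d i - 1)) / (∑ i, (d i : ℝ) - 1) *
          ((∑ i, (d i : ℝ) * (d i - 1)) / (∑ i, (d i : ℝ) - 3)) ≤
      probConf n d (fun f => numLoops f = 0 ∧ numParallelPairs f = 0) := by
  have hL := Nat.cast_le (α := ℝ) |>.mpr (card_pred_mul_numConfigs_numLoops_ne_zero_le (d := d))
  have hM := Nat.cast_le (α := ℝ) |>.mpr
    (card_pred_mul_card_sub_three_mul_numConfigs_numParallelPairs_ne_zero_le (d := d))
  have hcover : (numConfigs n d fun _ => True) ≤
      numConfigs n d (fun f => numLoops f = 0 ∧ numParallelPairs f = 0) +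
        (numConfigs n d (fun f => numLoops f ≠ 0) +
          numConfigs n d (fun f => numParallelPairs f ≠ 0)) :=
    (numConfigs_le_add (C := fun f => numLoops f ≠ 0 ∨ numParallelPairs f ≠ 0)
      fun f _ _ => by tauto).trans (Nat.add_le_add_left (numConfigs_le_add fun _ _ h => h) _)
  replace hcover := Nat.cast_le (α := ℝ) |>.mpr hcover
  have hT : (0 : ℝ) < numConfigs n d fun _ => True := by
    obtain ⟨f, hf⟩ := exists_isConfig hEven
    have : Nonempty {f // IsConfig f ∧ True} := ⟨⟨f, hf, trivial⟩⟩
    exact_mod_cast Nat.card_pos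
  rw [card_halfEdge] at hL hM
  have hN' : (4 : ℝ) ≤ ∑ i, (d i : ℝ) := by exact_mod_cast hN
  push_cast [Nat.cast_sub (by omega : 1 ≤ ∑ i, d i), Nat.cast_sub (by omega : 3 ≤ ∑ i, d i),
    Nat.cast_mul_cast_sub_one] at hL hM hcover
  set S := ∑ i, (d i : ℝ) * (d i - 1)
  set N := ∑ i, (d i : ℝ)
  have hL' : (numConfigs n d fun f => numLoops f ≠ 0 : ℝ) ≤
      S / (N - 1) * numConfigs n d fun _ => True := by
    rw [div_mul_eq_mul_div, le_div_iff₀ (by linarith)]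
    linarith
  have hM' : (numConfigs n d fun f => numParallelPairs f ≠ 0 : ℝ) ≤
      S / (N - 1) * (S / (N - 3)) * numConfigs n d fun _ => True := by
    rw [div_mul_div_comm, div_mul_eq_mul_div, le_div_iff₀ (by nlinarith)]
    linarith
  rw [probConf_eq_div, le_div_iff₀ hT]
  linarith

end ConfigurationModel

theorem Filter.Tendsto.div_sub_const_of_div_natCast {a b : ℕ → ℝ} {μ : ℝ} (c : ℝ)
    (ha : Tendsto (fun n => a n / n) atTop (nhds 0))
    (hb : Tendsto (fun n => b n / n) atTop (nhds μ)) (hμ : μ ≠ 0) :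
    Tendsto (fun n => a n / (b n - c)) atTop (nhds 0) := by
  have := ha.div (hb.sub (tendsto_const_div_atTop_nhds_zero_nat c)) (by simpa using hμ)
  rw [zero_div] at this
  refine this.congr' ?_
  filter_upwards [eventually_ne_atTop 0] with n hn
  simp only [Pi.div_apply]
  rw [← sub_div, div_div_div_cancel_right₀ (Nat.cast_ne_zero.mpr hn)]

theorem Filter.Tendsto.atTop_of_div_natCast {b : ℕ → ℝ} {μ : ℝ} (hμ : 0 < μ)
    (hb : Tendsto (fun n => b n / n) atTop (nhds μ)) : Tendsto b atTop atTop :=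
  (hb.pos_mul_atTop hμ tendsto_natCast_atTop_atTop).congr' <| by
    filter_upwards [eventually_ne_atTop 0] with n hn
    exact div_mul_cancel₀ _ (Nat.cast_ne_zero.mpr hn)

/-- If `(1/n) ∑ d i → μ > 0` and `(1/n) ∑ d i² → μ₂` with `ν = μ₂ - μ = 0`, then the
configuration model multigraph is whp simple: `P(L = 0 ∧ M = 0) → 1`. -/
theorem whp_simple_when_nu_zero
    (d : (n : ℕ) → Fin n → ℕ) (hEven : ∀ n, Even (∑ i, d n i))
    (μ μ₂ : ℝ) (hμ : 0 < μ)
    (h1 : Tendsto (fun n : ℕ => (∑ i, (d n i : ℝ)) / n) atTop (nhds μ))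
    (h2 : Tendsto (fun n : ℕ => (∑ i, (d n i : ℝ) ^ 2) / n) atTop (nhds μ₂))
    (hν : μ₂ - μ = 0) :
    Tendsto (fun n => probConf n (d n) (fun f => numLoops f = 0 ∧ numParallelPairs f = 0))
      atTop (nhds 1) := by
  have hS : Tendsto (fun n => (∑ i, (d n i : ℝ) * (d n i - 1)) / n) atTop (nhds 0) := by
    rw [← hν]
    convert h2.sub h1 using 2 with n
    rw [← sub_div, ← sum_sub_distrib]
    congr! 2 with i
    ring
  have hloop := hS.div_sub_const_of_div_natCast 1 h1 hμ.ne'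
  have hpar := hS.div_sub_const_of_div_natCast 3 h1 hμ.ne'
  have hN : ∀ᶠ n in atTop, 4 ≤ ∑ i, d n i := by
    filter_upwards [(h1.atTop_of_div_natCast hμ).eventually_ge_atTop 4] with n hn
    exact_mod_cast hn
  have hlower := (tendsto_const_nhds (x := (1 : ℝ))).sub hloop |>.sub (hloop.mul hpar)
  rw [mul_zero, sub_zero, sub_zero] at hlower
  refine tendsto_of_tendsto_of_tendsto_of_le_of_le' hlower tendsto_const_nhds ?_
    (.of_forall fun n => ConfigurationModel.probConf_le_one _)
  filter_upwards [hN] with n hn using ConfigurationModel.one_sub_le_probConf_simple (hEven n) hn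
end
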